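/- arXiv:1709.04780 — 4 statements merged into one kernel-verified Lean document; each statement's English description precedes it below -/
import Mathlib

section
/- Let α = 1 − c(1−p). Then for all x, y, t ∈ ℤ₊, d_t(x, y) ≤ |y − x|·α^t. -/
open scoped BigOperators
open Filter

noncomputable section

/-- Probability mass function of a Binomial(n, ε) random variable, evaluated at k. -/
def binomPMF (n : ℕ) (ε : ℝ) (k : ℕ) : ℝ :=
  if k ≤ n then (n.choose k : ℝ) * ε ^ k * (1 - ε) ^ (n - k) else 0

/-- Transition function `p^{p,c}` of the random walk with binomial catastrophes:
`p^{p,c}(i, i+1) = p` and `p^{p,c}(i, j) = (1-p) C(i,j) (1-c)^j c^(i-j)` for `j ≤ i`. -/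
def stepFn (p c : ℝ) (i j : ℕ) : ℝ :=
  (if j = i + 1 then p else 0) + (if j ≤ i then (1 - p) * binomPMF i (1 - c) j else 0)

/-- `law p c x t j = P_x(X_t = j)`, the time-`t` distribution of the chain started at `x`. -/
def law (p c : ℝ) (x : ℕ) : ℕ → ℕ → ℝ
  | 0, j => if j = x then 1 else 0
  | t + 1, j => ∑' i, law p c x t i * stepFn p c i j

/-- Mass that a probability mass function assigns to a set `A ⊆ ℕ`. -/
def massOf (q : ℕ → ℝ) (A : Set ℕ) : ℝ := ∑' j, A.indicator q j

/-- Total variation distance between two distributions on ℕ (given by their pmfs):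
the maximum over subsets `A ⊆ ℕ` of `|Q₁(A) - Q₂(A)|`. -/
def tvDist (q₁ q₂ : ℕ → ℝ) : ℝ := ⨆ A : Set ℕ, |massOf q₁ A - massOf q₂ A|

namespace TVAux

/-- shift of a sequence: `shift ν j = ν (j-1)`, with `shift ν 0 = 0`. -/
def shift (ν : ℕ → ℝ) : ℕ → ℝ
  | 0 => 0
  | j + 1 => ν j

lemma shift_add (ν μ : ℕ → ℝ) : ∀ j, shift (fun k => ν k + μ k) j = shift ν j + shift μ j
  | 0 => by simp [shift]
  | j + 1 => by simp [shift]

lemma binomPMF_nonneg {ε : ℝ} (h0 : 0 ≤ ε) (h1 : ε ≤ 1) (n k : ℕ) :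
    0 ≤ binomPMF n ε k := by
  unfold binomPMF
  have h2 : (0:ℝ) ≤ 1 - ε := by linarith
  split_ifs
  · exact mul_nonneg (mul_nonneg (by positivity) (pow_nonneg h0 _)) (pow_nonneg h2 _)
  · exact le_refl 0

lemma binomPMF_succ (n : ℕ) (ε : ℝ) :
    ∀ k, binomPMF (n + 1) ε k = ε * shift (binomPMF n ε) k + (1 - ε) * binomPMF n ε k
  | 0 => by
      simp [binomPMF, shift, pow_succ]
      ring
  | (k + 1) => by
      simp only [binomPMF, shift]
      by_cases h1 : k + 1 ≤ n
      · rw [if_pos (by omega : k + 1 ≤ n + 1), if_pos (by omega : k ≤ n), if_pos h1]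
        rw [Nat.choose_succ_succ]
        push_cast
        simp only [Nat.succ_eq_add_one, Nat.add_sub_add_right]
        have e2 : n - k = n - (k + 1) + 1 := by omega
        rw [e2, pow_succ]
        ring
      · by_cases h0 : k ≤ n
        · have hk : k = n := by omega
          subst hk
          rw [if_pos (le_refl (k + 1)), if_pos (le_refl k), if_neg h1]
          simp [Nat.choose_self]
          ring
        · rw [if_neg (by omega : ¬ k + 1 ≤ n + 1), if_neg h0, if_neg h1]
          ring

lemma binomPMF_sum (n : ℕ) (ε : ℝ) {N : ℕ} (hN : n + 1 ≤ N) :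
    ∑ j ∈ Finset.range N, binomPMF n ε j = 1 := by
  have h1 : ∑ j ∈ Finset.range N, binomPMF n ε j
      = ∑ j ∈ Finset.range (n + 1), binomPMF n ε j := by
    refine (Finset.sum_subset ?_ ?_).symm
    · intro j hj
      simp only [Finset.mem_range] at hj ⊢
      omega
    · intro j _ hj
      simp only [Finset.mem_range] at hj
      have : ¬ j ≤ n := by omega
      simp [binomPMF, this]
  rw [h1]
  have h2 : ∑ j ∈ Finset.range (n + 1), binomPMF n ε j
      = ∑ j ∈ Finset.range (n + 1), ε ^ j * (1 - ε) ^ (n - j) * (n.choose j : ℝ) := by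
    refine Finset.sum_congr rfl fun j hj => ?_
    simp only [Finset.mem_range] at hj
    have : j ≤ n := by omega
    simp only [binomPMF, if_pos this]
    ring
  rw [h2, ← add_pow]
  norm_num

/-- `rho p c i j`: the "difference kernel". -/
def rho (p c : ℝ) (i j : ℕ) : ℝ :=
  (if j = i + 1 then p else 0) + (1 - p) * (1 - c) * binomPMF i (1 - c) j

lemma rho_nonneg {p c : ℝ} (hp0 : 0 ≤ p) (hp1 : p ≤ 1) (hc0 : 0 ≤ c) (hc1 : c ≤ 1)
    (i j : ℕ) : 0 ≤ rho p c i j := by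
  unfold rho
  have hb := binomPMF_nonneg (by linarith : (0:ℝ) ≤ 1 - c) (by linarith : (1:ℝ) - c ≤ 1) i j
  have h1 : (0:ℝ) ≤ (1 - p) * (1 - c) * binomPMF i (1 - c) j := by
    apply mul_nonneg
    apply mul_nonneg <;> linarith
    exact hb
  split_ifs <;> linarith

lemma rho_zero {p c : ℝ} {i j : ℕ} (h : i + 1 < j) : rho p c i j = 0 := by
  have h1 : ¬ j = i + 1 := by omega
  have h2 : ¬ j ≤ i := by omega
  simp [rho, binomPMF, h1, h2]

lemma rho_sum {p c : ℝ} (i : ℕ) {N : ℕ} (hN : i + 2 ≤ N) :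
    ∑ j ∈ Finset.range N, rho p c i j = 1 - c * (1 - p) := by
  unfold rho
  rw [Finset.sum_add_distrib]
  have h1 : ∑ j ∈ Finset.range N, (if j = i + 1 then p else 0) = p := by
    rw [Finset.sum_ite_eq' (Finset.range N) (i + 1) (fun _ => p)]
    simp only [Finset.mem_range, if_pos (by omega : i + 1 < N)]
  have h2 : ∑ j ∈ Finset.range N, (1 - p) * (1 - c) * binomPMF i (1 - c) j
      = (1 - p) * (1 - c) := by
    rw [← Finset.mul_sum, binomPMF_sum i (1 - c) (by omega : i + 1 ≤ N), mul_one]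
  rw [h1, h2]
  ring

lemma stepFn_eq (p c : ℝ) (i j : ℕ) :
    stepFn p c i j = (if j = i + 1 then p else 0) + (1 - p) * binomPMF i (1 - c) j := by
  unfold stepFn
  by_cases h : j ≤ i
  · rw [if_pos h]
  · rw [if_neg h]
    simp [binomPMF, h]

lemma shift_rho (p c : ℝ) (i : ℕ) :
    ∀ j, shift (rho p c i) j
      = (if j = i + 2 then p else 0) + (1 - p) * (1 - c) * shift (binomPMF i (1 - c)) j
  | 0 => by simp [shift]
  | (j + 1) => by
      simp only [shift, rho]
      congr 1
      exact if_congr (by constructor <;> intro h <;> omega) rfl rfl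

lemma step_diff (p c : ℝ) (i j : ℕ) :
    stepFn p c (i + 1) j - stepFn p c i j = shift (rho p c i) j - rho p c i j := by
  rw [stepFn_eq, stepFn_eq, shift_rho, rho]
  rw [binomPMF_succ]
  have : i + 1 + 1 = i + 2 := rfl
  rw [this]
  ring

lemma law_zero (p c : ℝ) (x j : ℕ) : law p c x 0 j = if j = x then 1 else 0 := rfl

lemma stepFn_zero {p c : ℝ} {i j : ℕ} (h : i + 1 < j) : stepFn p c i j = 0 := by
  have h1 : ¬ j = i + 1 := by omega
  have h2 : ¬ j ≤ i := by omega
  simp [stepFn, h1, h2]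

lemma law_support (p c : ℝ) (x : ℕ) : ∀ t j, x + t < j → law p c x t j = 0
  | 0, j, h => by
      rw [law_zero, if_neg (by omega)]
  | (t + 1), j, h => by
      show (∑' i, law p c x t i * stepFn p c i j) = 0
      have hz : ∀ i, law p c x t i * stepFn p c i j = 0 := by
        intro i
        by_cases hi : x + t < i
        · rw [law_support p c x t i hi, zero_mul]
        · rw [stepFn_zero (by omega : i + 1 < j), mul_zero]
      rw [tsum_congr hz]
      exact tsum_zero

lemma law_succ (p c : ℝ) (x t j : ℕ) :
    law p c x (t + 1) j = ∑ i ∈ Finset.range (x + t + 1), law p c x t i * stepFn p c i j := by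
  show (∑' i, law p c x t i * stepFn p c i j) = _
  refine tsum_eq_sum fun i hi => ?_
  simp only [Finset.mem_range] at hi
  rw [law_support p c x t i (by omega), zero_mul]

lemma nbr {p c : ℝ} (hp0 : 0 ≤ p) (hp1 : p ≤ 1) (hc0 : 0 ≤ c) (hc1 : c ≤ 1) (x : ℕ) :
    ∀ t, ∃ ν : ℕ → ℝ, (∀ j, 0 ≤ ν j) ∧ (∀ j, x + t < j → ν j = 0) ∧
      (∑ j ∈ Finset.range (x + t + 1), ν j = (1 - c * (1 - p)) ^ t) ∧
      (∀ j, law p c (x + 1) t j - law p c x t j = shift ν j - ν j)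
  | 0 => by
      refine ⟨fun j => if j = x then 1 else 0, ?_, ?_, ?_, ?_⟩
      · intro j
        show (0:ℝ) ≤ if j = x then 1 else 0
        split_ifs <;> norm_num
      · intro j hj
        show (if j = x then (1:ℝ) else 0) = 0
        rw [if_neg (by omega)]
      · show (∑ j ∈ Finset.range (x + 0 + 1), if j = x then (1:ℝ) else 0) = _
        rw [Finset.sum_ite_eq' (Finset.range (x + 0 + 1)) x (fun _ => (1:ℝ))]
        simp [Finset.mem_range]
      · intro j
        rw [law_zero, law_zero]
        match j with
        | 0 =>
            have h1 : ¬ (0 = x + 1) := by omega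
            rw [if_neg h1]
            show (0:ℝ) - _ = shift _ 0 - _
            simp [shift]
        | (j + 1) =>
            show _ = shift (fun j => if j = x then (1:ℝ) else 0) (j + 1) - _
            simp only [shift, add_left_inj]
  | (t + 1) => by
      obtain ⟨ν, hν0, hνs, hνsum, hνd⟩ := nbr hp0 hp1 hc0 hc1 x t
      refine ⟨fun j => ∑ k ∈ Finset.range (x + t + 1), ν k * rho p c k j, ?_, ?_, ?_, ?_⟩
      · intro j
        apply Finset.sum_nonneg
        intro k _
        exact mul_nonneg (hν0 k) (rho_nonneg hp0 hp1 hc0 hc1 k j)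
      · intro j hj
        apply Finset.sum_eq_zero
        intro k hk
        simp only [Finset.mem_range] at hk
        rw [rho_zero (by omega : k + 1 < j), mul_zero]
      · rw [Finset.sum_comm]
        have : ∀ k ∈ Finset.range (x + t + 1),
            ∑ j ∈ Finset.range (x + (t + 1) + 1), ν k * rho p c k j
              = ν k * (1 - c * (1 - p)) := by
          intro k hk
          simp only [Finset.mem_range] at hk
          rw [← Finset.mul_sum, rho_sum k (by omega : k + 2 ≤ x + (t + 1) + 1)]
        rw [Finset.sum_congr rfl this, ← Finset.sum_mul, hνsum, ← pow_succ]
      · intro j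
        have e1 : law p c (x + 1) (t + 1) j
            = ∑ i ∈ Finset.range (x + t + 2), law p c (x + 1) t i * stepFn p c i j := by
          rw [law_succ, show x + 1 + t + 1 = x + t + 2 from by omega]
        have e2 : law p c x (t + 1) j
            = ∑ i ∈ Finset.range (x + t + 2), law p c x t i * stepFn p c i j := by
          rw [law_succ]
          have : ∑ i ∈ Finset.range (x + t + 2), law p c x t i * stepFn p c i j
              = (∑ i ∈ Finset.range (x + t + 1), law p c x t i * stepFn p c i j)
                + law p c x t (x + t + 1) * stepFn p c (x + t + 1) j :=
            Finset.sum_range_succ _ _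
          rw [this, law_support p c x t (x + t + 1) (by omega), zero_mul, add_zero]
        rw [e1, e2, ← Finset.sum_sub_distrib]
        have e3 : ∀ i ∈ Finset.range (x + t + 2),
            law p c (x + 1) t i * stepFn p c i j - law p c x t i * stepFn p c i j
              = (shift ν i - ν i) * stepFn p c i j := by
          intro i _
          rw [← sub_mul, hνd i]
        rw [Finset.sum_congr rfl e3]
        have e4 : ∑ i ∈ Finset.range (x + t + 2), (shift ν i - ν i) * stepFn p c i j
            = (∑ i ∈ Finset.range (x + t + 2), shift ν i * stepFn p c i j)
              - ∑ i ∈ Finset.range (x + t + 2), ν i * stepFn p c i j := by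
          rw [← Finset.sum_sub_distrib]
          exact Finset.sum_congr rfl fun i _ => by ring
        rw [e4]
        have e5 : ∑ i ∈ Finset.range (x + t + 2), shift ν i * stepFn p c i j
            = ∑ k ∈ Finset.range (x + t + 1), ν k * stepFn p c (k + 1) j := by
          rw [Finset.sum_range_succ']
          simp [shift]
        have e6 : ∑ i ∈ Finset.range (x + t + 2), ν i * stepFn p c i j
            = ∑ i ∈ Finset.range (x + t + 1), ν i * stepFn p c i j := by
          rw [Finset.sum_range_succ, hνs (x + t + 1) (by omega), zero_mul, add_zero]
        rw [e5, e6, ← Finset.sum_sub_distrib]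
        have e7 : ∀ k ∈ Finset.range (x + t + 1),
            ν k * stepFn p c (k + 1) j - ν k * stepFn p c k j
              = ν k * shift (rho p c k) j - ν k * rho p c k j := by
          intro k _
          rw [← mul_sub, step_diff, mul_sub]
        rw [Finset.sum_congr rfl e7, Finset.sum_sub_distrib]
        congr 1
        match j with
        | 0 => simp [shift]
        | (m + 1) => simp only [shift]

lemma multi {p c : ℝ} (hp0 : 0 ≤ p) (hp1 : p ≤ 1) (hc0 : 0 ≤ c) (hc1 : c ≤ 1) (x t : ℕ) :
    ∀ d, ∃ V : ℕ → ℝ, (∀ j, 0 ≤ V j) ∧ (∀ j, x + d + t < j → V j = 0) ∧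
      (∑ j ∈ Finset.range (x + d + t + 1), V j = d * (1 - c * (1 - p)) ^ t) ∧
      (∀ j, law p c (x + d) t j - law p c x t j = shift V j - V j)
  | 0 => by
      refine ⟨fun _ => 0, fun j => le_refl 0, fun j _ => rfl, by simp, ?_⟩
      intro j
      simp [shift]
      match j with
      | 0 => simp [shift]
      | (m + 1) => simp [shift]
  | (d + 1) => by
      obtain ⟨V, hV0, hVs, hVsum, hVd⟩ := multi hp0 hp1 hc0 hc1 x t d
      obtain ⟨ν, hν0, hνs, hνsum, hνd⟩ := nbr hp0 hp1 hc0 hc1 (x + d) t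
      refine ⟨fun j => V j + ν j, ?_, ?_, ?_, ?_⟩
      · intro j; exact add_nonneg (hV0 j) (hν0 j)
      · intro j hj
        show V j + ν j = 0
        rw [hVs j (by omega), hνs j (by omega), add_zero]
      · rw [Finset.sum_add_distrib]
        have e1 : ∑ j ∈ Finset.range (x + (d + 1) + t + 1), V j
            = ∑ j ∈ Finset.range (x + d + t + 1), V j := by
          have : x + (d + 1) + t + 1 = (x + d + t + 1) + 1 := by omega
          rw [this, Finset.sum_range_succ, hVs (x + d + t + 1) (by omega), add_zero]
        have e2 : ∑ j ∈ Finset.range (x + (d + 1) + t + 1), ν j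
            = ∑ j ∈ Finset.range (x + d + t + 1), ν j := by
          have : x + (d + 1) + t + 1 = (x + d + t + 1) + 1 := by omega
          rw [this, Finset.sum_range_succ, hνs (x + d + t + 1) (by omega), add_zero]
        rw [e1, e2, hVsum, hνsum]
        push_cast
        ring
      · intro j
        have : law p c (x + (d + 1)) t j - law p c x t j
            = (law p c (x + d + 1) t j - law p c (x + d) t j)
              + (law p c (x + d) t j - law p c x t j) := by
          have : x + (d + 1) = x + d + 1 := by omega
          rw [this]; ring
        rw [this, hνd j, hVd j, shift_add]
        ring

lemma abs_ite_sub_ite {P Q : Prop} [Decidable P] [Decidable Q] {v : ℝ} (hv : 0 ≤ v) :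
    |(if P then v else 0) - (if Q then v else 0)| ≤ v := by
  split_ifs <;> simp [abs_of_nonneg, abs_of_nonpos, hv]

lemma tv_bound_of (q₁ q₂ : ℕ → ℝ) (V : ℕ → ℝ) (M : ℕ) (S : ℝ)
    (hV0 : ∀ j, 0 ≤ V j)
    (hq₁ : ∀ j, M ≤ j → q₁ j = 0) (hq₂ : ∀ j, M ≤ j → q₂ j = 0)
    (hVM : ∀ j, M ≤ j → V j = 0)
    (hD : ∀ j, q₁ j - q₂ j = shift V j - V j)
    (hS : ∑ j ∈ Finset.range M, V j = S) :
    tvDist q₁ q₂ ≤ S := by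
  classical
  refine ciSup_le fun A => ?_
  have hm : ∀ (q : ℕ → ℝ), (∀ j, M ≤ j → q j = 0) →
      massOf q A = ∑ j ∈ Finset.range (M + 1), (if j ∈ A then q j else 0) := by
    intro q hq
    unfold massOf
    rw [tsum_eq_sum (s := Finset.range (M + 1))
      (fun j hj => by
        simp only [Finset.mem_range] at hj
        rw [Set.indicator_apply, hq j (by omega)]
        simp)]
    exact Finset.sum_congr rfl fun j _ => Set.indicator_apply A q j
  rw [hm q₁ hq₁, hm q₂ hq₂, ← Finset.sum_sub_distrib]
  have e0 : ∀ j ∈ Finset.range (M + 1),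
      (if j ∈ A then q₁ j else 0) - (if j ∈ A then q₂ j else 0)
        = (if j ∈ A then shift V j else 0) - (if j ∈ A then V j else 0) := by
    intro j _
    by_cases hj : j ∈ A
    · rw [if_pos hj, if_pos hj, if_pos hj, if_pos hj]
      exact hD j
    · simp [hj]
  rw [Finset.sum_congr rfl e0, Finset.sum_sub_distrib]
  have e1 : ∑ j ∈ Finset.range (M + 1), (if j ∈ A then shift V j else 0)
      = ∑ k ∈ Finset.range M, (if k + 1 ∈ A then V k else 0) := by
    rw [Finset.sum_range_succ']
    simp [shift]
  have e2 : ∑ j ∈ Finset.range (M + 1), (if j ∈ A then V j else 0)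
      = ∑ j ∈ Finset.range M, (if j ∈ A then V j else 0) := by
    rw [Finset.sum_range_succ, hVM M (le_refl M)]
    simp
  rw [e1, e2, ← Finset.sum_sub_distrib]
  calc |∑ k ∈ Finset.range M, ((if k + 1 ∈ A then V k else 0) - (if k ∈ A then V k else 0))|
      ≤ ∑ k ∈ Finset.range M, |(if k + 1 ∈ A then V k else 0) - (if k ∈ A then V k else 0)| :=
        Finset.abs_sum_le_sum_abs _ _
    _ ≤ ∑ k ∈ Finset.range M, V k :=
        Finset.sum_le_sum fun k _ => abs_ite_sub_ite (hV0 k)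
    _ = S := hS

lemma tvDist_comm (q₁ q₂ : ℕ → ℝ) : tvDist q₁ q₂ = tvDist q₂ q₁ := by
  unfold tvDist
  congr 1
  funext A
  exact abs_sub_comm _ _

lemma main_bound {p c : ℝ} (hp0 : 0 ≤ p) (hp1 : p ≤ 1) (hc0 : 0 ≤ c) (hc1 : c ≤ 1)
    (x t d : ℕ) :
    tvDist (law p c (x + d) t) (law p c x t) ≤ d * (1 - c * (1 - p)) ^ t := by
  obtain ⟨V, hV0, hVs, hVsum, hVd⟩ := multi hp0 hp1 hc0 hc1 x t d
  exact tv_bound_of _ _ V (x + d + t + 1) _ hV0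
    (fun j hj => law_support p c (x + d) t j (by omega))
    (fun j hj => law_support p c x t j (by omega))
    (fun j hj => hVs j (by omega)) hVd hVsum

end TVAux

/-- **Proposition 3.1.** Let `α = 1 - c(1-p)`. Then for all `x, y, t ∈ ℤ₊`,
`d_t(x, y) ≤ |y - x| α^t`. -/
theorem tv_upper_bound
    (p c : ℝ) (hp : p ∈ Set.Ioo (0 : ℝ) 1) (hc : c ∈ Set.Ioc (0 : ℝ) 1)
    (x y t : ℕ) :
    tvDist (law p c y t) (law p c x t) ≤ |(y : ℝ) - (x : ℝ)| * (1 - c * (1 - p)) ^ t := by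
  obtain ⟨hp0, hp1⟩ := hp
  obtain ⟨hc0, hc1⟩ := hc
  have hp0' : (0:ℝ) ≤ p := le_of_lt hp0
  have hp1' : p ≤ 1 := le_of_lt hp1
  have hc0' : (0:ℝ) ≤ c := le_of_lt hc0
  rcases le_total x y with hxy | hyx
  · have hy : y = x + (y - x) := by omega
    have habs : |(y : ℝ) - (x : ℝ)| = ((y - x : ℕ) : ℝ) := by
      rw [abs_of_nonneg (sub_nonneg.mpr (Nat.cast_le.mpr hxy)), Nat.cast_sub hxy]
    rw [habs]
    calc tvDist (law p c y t) (law p c x t)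
        = tvDist (law p c (x + (y - x)) t) (law p c x t) := by rw [← hy]
      _ ≤ (y - x : ℕ) * (1 - c * (1 - p)) ^ t :=
          TVAux.main_bound hp0' hp1' hc0' hc1 x t (y - x)
  · have hx : x = y + (x - y) := by omega
    have habs : |(y : ℝ) - (x : ℝ)| = ((x - y : ℕ) : ℝ) := by
      rw [abs_sub_comm, abs_of_nonneg (sub_nonneg.mpr (Nat.cast_le.mpr hyx)), Nat.cast_sub hyx]
    rw [habs, TVAux.tvDist_comm]
    calc tvDist (law p c x t) (law p c y t)
        = tvDist (law p c (y + (x - y)) t) (law p c y t) := by rw [← hx]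
      _ ≤ (x - y : ℕ) * (1 - c * (1 - p)) ^ t :=
          TVAux.main_bound hp0' hp1' hc0' hc1 y t (x - y)
end
end

section
/- Let α = 1 − c(1−p) and p̃ = p/α. For every x, t ∈ ℤ₊: (1) under the coupling started at (x, 1), P_{x,x+1}(ξ > t) = α^t; (2) for every j ∈ ℤ₊, P_{x,x+1}(X_t = j | ξ > t) = P_x^{(p̃)}(X_t = j), i.e. the conditional law of X_t given ξ > t equals the law at time t of the chain with parameters (p̃, c) started at x. -/
open scoped BigOperators
open Filter

noncomputable section

/-- One-step transition of the coupling `(X_t, H_t)`: from `(u, h)`, with probability `p`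
move to `(u+1, h)`, with probability `1-p` move to independent binomial thinnings. -/
def cstep (p c : ℝ) (s s' : ℕ × ℕ) : ℝ :=
  (if s' = (s.1 + 1, s.2) then p else 0) +
    (1 - p) * binomPMF s.1 (1 - c) s'.1 * binomPMF s.2 (1 - c) s'.2

/-- `slaw p c x h t s = P_{(x,h)}((X_t, H_t) = s, ξ > t)` where `ξ = inf{t ≥ 0 : H_t = 0}`,
i.e. the law at time `t` of the coupling started at `(x, h)` killed when `H` hits `0`. -/
def slaw (p c : ℝ) (x h : ℕ) : ℕ → ℕ × ℕ → ℝ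
  | 0, s => if s = (x, h) ∧ s.2 ≠ 0 then 1 else 0
  | t + 1, s => if s.2 = 0 then 0 else ∑' s' : ℕ × ℕ, slaw p c x h t s' * cstep p c s' s

/-! From `(u, 1)` the gap `H` survives a step exactly when `X` moves up (probability `p`) or
when its single particle survives the thinning (probability `(1 - p)(1 - c)`), and it can never
exceed `1`. So the killed coupling lives on `ℕ × {1}`, and its sub-stochastic kernel there is
`p δ_{i+1} + (1 - p)(1 - c) Bin(i, 1 - c) = α p^{p̃,c}(i, ·)` with `α = 1 - c(1 - p)`,
`p̃ = p / α`. Hence `P((X_t, H_t) = (j, 1), ξ > t) = α^t P_x^{(p̃)}(X_t = j)`. -/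

lemma tsum_ite_snd_eq {α β M : Type*} [AddCommMonoid M] [TopologicalSpace M] [DecidableEq β]
    (g : α × β → M) (b : β) : ∑' s : α × β, (if s.2 = b then g s else 0) = ∑' a, g (a, b) := by
  rw [← (Prod.mk_left_injective b).tsum_eq fun s hs => ?_]
  · simp
  · by_cases h : s.2 = b
    · exact ⟨s.1, Prod.ext rfl h.symm⟩
    · simp [h] at hs

lemma binomPMF_eq_zero_of_lt {n k : ℕ} (h : n < k) (ε : ℝ) : binomPMF n ε k = 0 := by
  simp [binomPMF, Nat.not_le.mpr h]

lemma sum_range_binomPMF (n : ℕ) (ε : ℝ) : ∑ k ∈ Finset.range (n + 1), binomPMF n ε k = 1 := by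
  calc ∑ k ∈ Finset.range (n + 1), binomPMF n ε k
      = ∑ k ∈ Finset.range (n + 1), ε ^ k * (1 - ε) ^ (n - k) * (n.choose k : ℝ) :=
        Finset.sum_congr rfl fun k hk => by
          rw [binomPMF, if_pos (Nat.lt_succ_iff.mp (Finset.mem_range.mp hk))]; ring
    _ = 1 := by rw [← add_pow]; simp

lemma stepFn_eq_zero_of_lt {i j : ℕ} (h : i + 1 < j) (q c : ℝ) : stepFn q c i j = 0 := by
  simp [stepFn, show j ≠ i + 1 by omega, show ¬ j ≤ i by omega]

lemma tsum_stepFn (q c : ℝ) (i : ℕ) : ∑' j, stepFn q c i j = 1 := by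
  have hlow : ∀ j ∈ Finset.range (i + 1), stepFn q c i j = (1 - q) * binomPMF i (1 - c) j := by
    intro j hj
    rw [Finset.mem_range] at hj
    simp [stepFn, show j ≠ i + 1 by omega, show j ≤ i by omega]
  rw [tsum_eq_sum (s := Finset.range (i + 2)) fun j hj =>
      stepFn_eq_zero_of_lt (by simp at hj; omega) q c,
    Finset.sum_range_succ, Finset.sum_congr rfl hlow, ← Finset.mul_sum, sum_range_binomPMF]
  simp [stepFn]

lemma law_eq_zero_of_lt (q c : ℝ) (x : ℕ) : ∀ {t j : ℕ}, x + t < j → law q c x t j = 0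
  | 0, j, h => by simp [law, show j ≠ x by omega]
  | t + 1, j, h => by
    rw [law]
    refine (tsum_congr fun i => ?_).trans tsum_zero
    by_cases hi : x + t < i
    · rw [law_eq_zero_of_lt q c x hi, zero_mul]
    · rw [stepFn_eq_zero_of_lt (by omega), mul_zero]

lemma law_succ_eq_sum (q c : ℝ) (x t j : ℕ) :
    law q c x (t + 1) j = ∑ i ∈ Finset.range (x + t + 1), law q c x t i * stepFn q c i j := by
  rw [law]
  exact tsum_eq_sum fun i hi => by
    rw [law_eq_zero_of_lt q c x (by simp at hi; omega), zero_mul]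

lemma tsum_law (q c : ℝ) (x : ℕ) : ∀ t, ∑' j, law q c x t j = 1
  | 0 => by simp [law]
  | t + 1 => by
    have hsumm : ∀ i, Summable fun j => law q c x t i * stepFn q c i j := fun i =>
      summable_of_ne_finset_zero (s := Finset.range (i + 2)) fun j hj => by
        rw [stepFn_eq_zero_of_lt (by simp at hj; omega), mul_zero]
    calc ∑' j, law q c x (t + 1) j
        = ∑ i ∈ Finset.range (x + t + 1), ∑' j, law q c x t i * stepFn q c i j := by
          simp_rw [law_succ_eq_sum]
          exact Summable.tsum_finsetSum fun i _ => hsumm i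
      _ = ∑' i, law q c x t i := by
          simp_rw [tsum_mul_left, tsum_stepFn, mul_one]
          exact (tsum_eq_sum fun i hi => law_eq_zero_of_lt q c x (by simp at hi; omega)).symm
      _ = 1 := tsum_law q c x t

lemma cstep_one_one {p c : ℝ} (hα : 1 - c * (1 - p) ≠ 0) (i j : ℕ) :
    cstep p c (i, 1) (j, 1) = (1 - c * (1 - p)) * stepFn (p / (1 - c * (1 - p))) c i j := by
  have hbin : binomPMF 1 (1 - c) 1 = 1 - c := by norm_num [binomPMF]
  simp only [cstep, stepFn, hbin, Prod.mk.injEq, and_true]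
  split_ifs with hup hle hle
  · omega
  · rw [binomPMF_eq_zero_of_lt (by omega), add_zero, mul_div_cancel₀ _ hα]; ring
  · rw [zero_add, zero_add, ← mul_assoc, mul_one_sub (1 - c * (1 - p)), mul_div_cancel₀ _ hα]
    ring
  · rw [binomPMF_eq_zero_of_lt (by omega)]; ring

lemma cstep_one_eq_zero_of_two_le (p c : ℝ) (i j : ℕ) {h : ℕ} (hh : 2 ≤ h) :
    cstep p c (i, 1) (j, h) = 0 := by
  simp [cstep, binomPMF_eq_zero_of_lt (show 1 < h by omega), show h ≠ 1 by omega]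

theorem slaw_one_eq {p c : ℝ} (hα : 1 - c * (1 - p) ≠ 0) (x : ℕ) :
    ∀ t (s : ℕ × ℕ), slaw p c x 1 t s =
      if s.2 = 1 then (1 - c * (1 - p)) ^ t * law (p / (1 - c * (1 - p))) c x t s.1 else 0
  | 0, ⟨j, h⟩ => by
    by_cases hh : h = 1 <;> simp [slaw, law, hh, and_comm]
  | t + 1, ⟨j, h⟩ => by
    have hreduce : ∑' s' : ℕ × ℕ, slaw p c x 1 t s' * cstep p c s' (j, h) =
        ∑' i, (1 - c * (1 - p)) ^ t * law (p / (1 - c * (1 - p))) c x t i *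
          cstep p c (i, 1) (j, h) := by
      simp_rw [slaw_one_eq hα x t, ite_mul, zero_mul]
      exact tsum_ite_snd_eq _ 1
    rw [slaw]
    rcases h with _ | _ | h
    · simp
    · simp only [hreduce, cstep_one_one hα, law, ← tsum_mul_left, if_pos, pow_succ]
      exact tsum_congr fun i => by ring
    · simp [hreduce, cstep_one_eq_zero_of_two_le]

/-- **Lemma 3.5.** Let `α = 1 - c(1-p)` and `p̃ = p/α`. For the coupling started at
`(x, x+1)` (i.e. at `(x, 1)` in the `(X, H)` coordinates): (1) `P_{x,x+1}(ξ > t) = α^t`;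
(2) the conditional law of `X_t` given `ξ > t` is the law at time `t` of the chain with
parameters `(p̃, c)` started at `x`. -/
theorem coupling_survival_law
    (p c : ℝ) (hp : p ∈ Set.Ioo (0 : ℝ) 1) (hc : c ∈ Set.Ioc (0 : ℝ) 1)
    (x t : ℕ) :
    (∑' s : ℕ × ℕ, slaw p c x 1 t s) = (1 - c * (1 - p)) ^ t ∧
    ∀ j : ℕ,
      (∑' h' : ℕ, slaw p c x 1 t (j, h')) / (∑' s : ℕ × ℕ, slaw p c x 1 t s) =
        law (p / (1 - c * (1 - p))) c x t j := by
  have hα : 1 - c * (1 - p) ≠ 0 := by nlinarith [hp.1, hp.2, hc.2]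
  have hsurv : ∑' s : ℕ × ℕ, slaw p c x 1 t s = (1 - c * (1 - p)) ^ t := by
    rw [tsum_congr (slaw_one_eq hα x t), tsum_ite_snd_eq, tsum_mul_left, tsum_law, mul_one]
  refine ⟨hsurv, fun j => ?_⟩
  rw [hsurv, tsum_congr fun h => slaw_one_eq hα x t (j, h), tsum_ite_eq,
    mul_div_cancel_left₀ _ (pow_ne_zero t hα)]
end
end

section
/- Let α = 1 − c(1−p), p̃ = p/α, and let π^{(p̃)} be the stationary distribution of the chain with parameters (p̃, c). Suppose j* ∈ ℤ₊ maximizes π^{(p̃)}(·). Then for all x, y ∈ ℤ₊ with x < y: π^{(p̃)}(j*) ≤ liminf_{t→∞} d_t(x,y)/((y−x)·α^t) ≤ limsup_{t→∞} d_t(x,y)/((y−x)·α^t) ≤ 1. In particular, lim_{t→∞} (1/t)·ln d_t(x,y) = ln α. -/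
open scoped BigOperators
open Filter

noncomputable section

/-!
Write `α = 1 - c(1 - p)` and `p̃ = p / α`. One step of the walk from `i + 1` and from `i`
differ by `α` times the discrete derivative of the `p̃`-walk's step from `i`; by induction,
`P_{z+1}(X_t = ·) - P_z(X_t = ·) = α^t (P̃_z(X_t + 1 = ·) - P̃_z(X_t = ·))`.
Summing over `z ∈ [x, y)`, every event changes by at most `(y - x) α^t`, while the event
`{X_t ≤ m}` changes by exactly `α^t ∑_z P̃_z(X_t = m)`. The same estimate for the `p̃`-walk,
integrated against its stationary law, gives `P̃_z(X_t = m) → π^{(p̃)}(m)`, and with `m = j*`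
the two bounds squeeze `d_t(x, y) / ((y - x) α^t)` and `log d_t(x, y) / t`.
-/

namespace CatastropheWalk

open Finset Topology

def shiftUp (f : ℕ → ℝ) : ℕ → ℝ
  | 0 => 0
  | j + 1 => f j

@[simp] lemma shiftUp_zero (f : ℕ → ℝ) : shiftUp f 0 = 0 := rfl

@[simp] lemma shiftUp_succ (f : ℕ → ℝ) (j : ℕ) : shiftUp f (j + 1) = f j := rfl

lemma sum_range_succ_shiftUp_mul (f g : ℕ → ℝ) (n : ℕ) :
    ∑ i ∈ range (n + 1), shiftUp f i * g i = ∑ i ∈ range n, f i * g (i + 1) := by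
  simp [sum_range_succ']

lemma shiftUp_mul_add_mul (a b : ℝ) (f g : ℕ → ℝ) (j : ℕ) :
    shiftUp (fun k => a * f k + b * g k) j = a * shiftUp f j + b * shiftUp g j := by
  cases j <;> simp

lemma binomPMF_eq_zero {n k : ℕ} (h : n < k) (ε : ℝ) : binomPMF n ε k = 0 := by
  simp [binomPMF, Nat.not_le.mpr h]

lemma binomPMF_nonneg {ε : ℝ} (hε : ε ∈ Set.Icc (0 : ℝ) 1) (n k : ℕ) :
    0 ≤ binomPMF n ε k := by
  unfold binomPMF
  split_ifs
  · exact mul_nonneg (mul_nonneg (Nat.cast_nonneg _) (pow_nonneg hε.1 _))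
      (pow_nonneg (sub_nonneg.2 hε.2) _)
  · exact le_rfl

lemma hasSum_binomPMF (n : ℕ) (ε : ℝ) : HasSum (binomPMF n ε) 1 := by
  convert (hasSum_sum_of_ne_finset_zero fun k hk => binomPMF_eq_zero (by simpa using hk) ε :
    HasSum (binomPMF n ε) (∑ k ∈ range (n + 1), binomPMF n ε k)) using 1
  rw [← one_pow n, ← add_sub_cancel ε 1, add_pow]
  refine sum_congr rfl fun k hk => ?_
  rw [binomPMF, if_pos (Nat.lt_succ_iff.mp (mem_range.mp hk))]
  ring

lemma binomPMF_succ (n : ℕ) (ε : ℝ) (j : ℕ) :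
    binomPMF (n + 1) ε j = (1 - ε) * binomPMF n ε j + ε * shiftUp (binomPMF n ε) j := by
  rcases j with _ | k
  · simp [binomPMF]; ring
  simp only [shiftUp_succ, binomPMF]
  rcases lt_trichotomy k n with h | rfl | h
  · rw [if_pos (by omega), if_pos (by omega), if_pos h.le, Nat.choose_succ_succ, Nat.cast_add,
      Nat.succ_sub_succ, show n - k = n - (k + 1) + 1 by omega]
    ring
  · simp [pow_succ']
  · rw [if_neg (by omega), if_neg (by omega), if_neg (by omega)]
    ring

-- `decayRate p c` and `tiltedProb p c` are the paper's `α` and `p̃`.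
def decayRate (p c : ℝ) : ℝ := 1 - c * (1 - p)

def tiltedProb (p c : ℝ) : ℝ := p / decayRate p c

lemma decayRate_pos {p c : ℝ} (hp : 0 < p) (hc : c ∈ Set.Icc (0 : ℝ) 1) :
    0 < decayRate p c := by
  unfold decayRate
  rcases le_or_gt p 1 with h | h <;> nlinarith [hc.1, hc.2]

lemma decayRate_lt_one {p c : ℝ} (hp : p < 1) (hc : 0 < c) : decayRate p c < 1 := by
  unfold decayRate
  nlinarith

lemma decayRate_mul_tiltedProb {p c : ℝ} (h : decayRate p c ≠ 0) :
    decayRate p c * tiltedProb p c = p :=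
  mul_div_cancel₀ p h

lemma tiltedProb_mem_Icc {p c : ℝ} (hp : p ∈ Set.Ioc (0 : ℝ) 1)
    (hc : c ∈ Set.Icc (0 : ℝ) 1) :
    tiltedProb p c ∈ Set.Icc (0 : ℝ) 1 := by
  have hα := decayRate_pos hp.1 hc
  refine ⟨div_nonneg hp.1.le hα.le, (div_le_one hα).mpr ?_⟩
  unfold decayRate
  nlinarith [hp.2, hc.2]

lemma stepFn_eq (p c : ℝ) (i j : ℕ) :
    stepFn p c i j = p * (if j = i + 1 then 1 else 0) + (1 - p) * binomPMF i (1 - c) j := by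
  unfold stepFn
  congr 1
  · simp
  · split_ifs with h
    · rfl
    · rw [binomPMF_eq_zero (by omega), mul_zero]

lemma stepFn_eq_zero {i j : ℕ} (h : i + 1 < j) (p c : ℝ) : stepFn p c i j = 0 := by
  rw [stepFn_eq, if_neg (by omega), binomPMF_eq_zero (by omega)]
  ring

lemma stepFn_nonneg {p c : ℝ} (hp : p ∈ Set.Icc (0 : ℝ) 1) (hc : c ∈ Set.Icc (0 : ℝ) 1)
    (i j : ℕ) :
    0 ≤ stepFn p c i j := by
  have := binomPMF_nonneg (ε := 1 - c) ⟨by linarith [hc.2], by linarith [hc.1]⟩ i j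
  rw [stepFn_eq]
  split_ifs <;> nlinarith [hp.1, hp.2]

lemma hasSum_stepFn (p c : ℝ) (i : ℕ) : HasSum (stepFn p c i) 1 := by
  have := ((hasSum_ite_eq (i + 1) (1 : ℝ)).mul_left p).add
    ((hasSum_binomPMF i (1 - c)).mul_left (1 - p))
  rw [show p * 1 + (1 - p) * 1 = 1 by ring] at this
  exact funext (stepFn_eq p c i) ▸ this

lemma stepFn_succ_sub_stepFn {p c pt : ℝ} (hpt : decayRate p c * pt = p) (i j : ℕ) :
    stepFn p c (i + 1) j - stepFn p c i j
      = decayRate p c * (shiftUp (stepFn pt c i) j - stepFn pt c i j) := by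
  have hδ : shiftUp (fun k => if k = i + 1 then (1 : ℝ) else 0) j
      = if j = i + 1 + 1 then 1 else 0 := by
    cases j <;> simp
  rw [funext (stepFn_eq pt c i), shiftUp_mul_add_mul, hδ, stepFn_eq, stepFn_eq,
    binomPMF_succ, sub_sub_cancel]
  beta_reduce
  unfold decayRate at hpt ⊢
  linear_combination (shiftUp (binomPMF i (1 - c)) j - binomPMF i (1 - c) j
    + (if j = i + 1 then 1 else 0) - (if j = i + 1 + 1 then 1 else 0)) * hpt

lemma law_eq_zero_of_lt {p c : ℝ} {x t j : ℕ} (h : x + t < j) : law p c x t j = 0 := by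
  induction t generalizing j with
  | zero => simp [law]; omega
  | succ t ih =>
    rw [law]
    convert tsum_zero with i
    rcases le_or_gt i (x + t) with hi | hi
    · rw [stepFn_eq_zero (by omega), mul_zero]
    · rw [ih hi, zero_mul]

lemma law_succ_eq_sum (p c : ℝ) {x t N : ℕ} (hN : x + t < N) (j : ℕ) :
    law p c x (t + 1) j = ∑ i ∈ range N, law p c x t i * stepFn p c i j := by
  rw [law]
  exact tsum_eq_sum fun i hi => by
    rw [law_eq_zero_of_lt (by simp at hi; omega), zero_mul]

lemma law_nonneg {p c : ℝ} (hp : p ∈ Set.Icc (0 : ℝ) 1) (hc : c ∈ Set.Icc (0 : ℝ) 1)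
    (x t j : ℕ) :
    0 ≤ law p c x t j := by
  induction t generalizing j with
  | zero => simp only [law]; split_ifs <;> norm_num
  | succ t ih =>
    rw [law_succ_eq_sum p c (Nat.lt_succ_self _)]
    exact sum_nonneg fun i _ => mul_nonneg (ih i) (stepFn_nonneg hp hc i j)

lemma hasSum_law (p c : ℝ) (x t : ℕ) : HasSum (law p c x t) 1 := by
  induction t with
  | zero => simpa [law] using hasSum_ite_eq x (1 : ℝ)
  | succ t ih =>
    have hmass : ∑ i ∈ range (x + t + 1), law p c x t i = 1 :=
      (hasSum_sum_of_ne_finset_zero fun i hi =>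
        law_eq_zero_of_lt (by simp at hi; omega)).unique ih
    have := hasSum_sum fun i (_ : i ∈ range (x + t + 1)) =>
      (hasSum_stepFn p c i).mul_left (law p c x t i)
    simp only [mul_one, hmass] at this
    exact funext (law_succ_eq_sum p c (Nat.lt_succ_self _)) ▸ this

lemma law_le_one {p c : ℝ} (hp : p ∈ Set.Icc (0 : ℝ) 1) (hc : c ∈ Set.Icc (0 : ℝ) 1)
    (x t j : ℕ) :
    law p c x t j ≤ 1 :=
  le_hasSum (hasSum_law p c x t) j fun i _ => law_nonneg hp hc x t i

lemma shiftUp_law_succ (p c : ℝ) (x t j : ℕ) :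
    shiftUp (law p c x (t + 1)) j
      = ∑ i ∈ range (x + t + 1), law p c x t i * shiftUp (stepFn p c i) j := by
  cases j with
  | zero => simp
  | succ j => exact law_succ_eq_sum p c (Nat.lt_succ_self _) j

lemma law_succ_sub_law {p c pt : ℝ} (hpt : decayRate p c * pt = p) (z t j : ℕ) :
    law p c (z + 1) t j - law p c z t j
      = decayRate p c ^ t * (shiftUp (law pt c z t) j - law pt c z t j) := by
  induction t generalizing j with
  | zero => cases j <;> simp [law]
  | succ t ih =>
    set g := law pt c z t
    have hg : g (z + t + 1) = 0 := law_eq_zero_of_lt (Nat.lt_succ_self _)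
    rw [law_succ_eq_sum p c (show z + 1 + t < z + t + 2 by omega),
      law_succ_eq_sum p c (show z + t < z + t + 2 by omega), ← sum_sub_distrib,
      shiftUp_law_succ, law_succ_eq_sum pt c (Nat.lt_succ_self _), ← sum_sub_distrib]
    calc ∑ i ∈ range (z + t + 2), (law p c (z + 1) t i * stepFn p c i j
          - law p c z t i * stepFn p c i j)
        = decayRate p c ^ t *
            ∑ i ∈ range (z + t + 2), (shiftUp g i - g i) * stepFn p c i j := by
          rw [mul_sum]
          exact sum_congr rfl fun i _ => by rw [← sub_mul, ih]; ring
      _ = decayRate p c ^ t * ∑ i ∈ range (z + t + 1),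
            g i * (stepFn p c (i + 1) j - stepFn p c i j) := by
          simp only [sub_mul, sum_sub_distrib, sum_range_succ_shiftUp_mul, mul_sub]
          rw [sum_range_succ _ (z + t + 1), hg]
          ring
      _ = _ := by
          simp only [stepFn_succ_sub_stepFn hpt, mul_sum, pow_succ]
          exact sum_congr rfl fun i _ => by ring

lemma massOf_mem_Icc {q : ℕ → ℝ} (h0 : ∀ j, 0 ≤ q j) (h1 : HasSum q 1) (A : Set ℕ) :
    massOf q A ∈ Set.Icc (0 : ℝ) 1 :=
  ⟨tsum_nonneg fun j => Set.indicator_nonneg (fun j _ => h0 j) j,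
    h1.tsum_eq ▸ (h1.summable.indicator A).tsum_le_tsum (Set.indicator_le_self' fun j _ => h0 j)
      h1.summable⟩

lemma massOf_singleton (q : ℕ → ℝ) (j : ℕ) : massOf q {j} = q j := by
  simp [massOf, Set.indicator_apply]

lemma massOf_Iio (q : ℕ → ℝ) (m : ℕ) : massOf q (Set.Iio m) = ∑ j ∈ range m, q j := by
  rw [massOf, tsum_eq_sum (s := range m) fun j hj => Set.indicator_of_notMem (by simpa using hj) q]
  exact sum_congr rfl fun j hj => Set.indicator_of_mem (by simpa using hj) q

lemma massOf_shiftUp {q : ℕ → ℝ} (hq : Summable q) (A : Set ℕ) :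
    massOf (shiftUp q) A = massOf q ((· + 1) ⁻¹' A) := by
  have hsucc : (fun j => A.indicator (shiftUp q) (j + 1)) = ((· + 1) ⁻¹' A).indicator q := by
    ext j; by_cases h : j + 1 ∈ A <;> simp [h]
  rw [massOf, tsum_eq_zero_add' (hsucc ▸ hq.indicator _), hsucc]
  simp [massOf]

lemma summable_shiftUp {q : ℕ → ℝ} (hq : Summable q) : Summable (shiftUp q) :=
  (summable_nat_add_iff 1).mp hq

lemma massOf_sub_eq_mul_massOf_sub {q₁ q₂ r₁ r₂ : ℕ → ℝ} (hq₁ : Summable q₁)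
    (hq₂ : Summable q₂) (hr₁ : Summable r₁) (hr₂ : Summable r₂) {a : ℝ}
    (h : ∀ j, q₁ j - q₂ j = a * (r₁ j - r₂ j)) (A : Set ℕ) :
    massOf q₁ A - massOf q₂ A = a * (massOf r₁ A - massOf r₂ A) := by
  rw [massOf, massOf, massOf, massOf, ← (hq₁.indicator A).tsum_sub (hq₂.indicator A),
    ← (hr₁.indicator A).tsum_sub (hr₂.indicator A), ← tsum_mul_left]
  refine tsum_congr fun j => ?_
  by_cases hj : j ∈ A <;> simp [hj, h]

lemma summable_law (p c : ℝ) (x t : ℕ) : Summable (law p c x t) := (hasSum_law p c x t).summable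

lemma massOf_law_succ_sub {p c pt : ℝ} (hpt : decayRate p c * pt = p) (z t : ℕ) (A : Set ℕ) :
    massOf (law p c (z + 1) t) A - massOf (law p c z t) A
      = decayRate p c ^ t *
          (massOf (law pt c z t) ((· + 1) ⁻¹' A) - massOf (law pt c z t) A) := by
  rw [massOf_sub_eq_mul_massOf_sub (summable_law _ _ _ _) (summable_law _ _ _ _)
    (summable_shiftUp (summable_law _ _ _ _)) (summable_law _ _ _ _) (law_succ_sub_law hpt z t) A,
    massOf_shiftUp (summable_law _ _ _ _)]

lemma massOf_law_sub_eq_sum {p c pt : ℝ} (hpt : decayRate p c * pt = p) {x y : ℕ}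
    (hxy : x ≤ y) (t : ℕ) (A : Set ℕ) :
    massOf (law p c y t) A - massOf (law p c x t) A
      = decayRate p c ^ t * ∑ w ∈ range (y - x),
          (massOf (law pt c (x + w) t) ((· + 1) ⁻¹' A) - massOf (law pt c (x + w) t) A) := by
  obtain ⟨n, rfl⟩ := Nat.exists_eq_add_of_le hxy
  have := sum_range_sub (fun w => massOf (law p c (x + w) t) A) n
  rw [add_zero] at this
  rw [Nat.add_sub_cancel_left, ← this, mul_sum]
  exact sum_congr rfl fun w _ => massOf_law_succ_sub hpt (x + w) t A

lemma abs_massOf_law_sub_le {p c pt : ℝ} (hc : c ∈ Set.Icc (0 : ℝ) 1)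
    (hpt : decayRate p c * pt = p) (hpt' : pt ∈ Set.Icc (0 : ℝ) 1) (hα : 0 ≤ decayRate p c)
    {x y : ℕ} (hxy : x ≤ y) (t : ℕ) (A : Set ℕ) :
    |massOf (law p c y t) A - massOf (law p c x t) A| ≤ (y - x) * decayRate p c ^ t := by
  have hterm (z : ℕ) (B : Set ℕ) : massOf (law pt c z t) B ∈ Set.Icc (0 : ℝ) 1 :=
    massOf_mem_Icc (law_nonneg hpt' hc z t) (hasSum_law pt c z t) B
  rw [massOf_law_sub_eq_sum hpt hxy, abs_mul, abs_of_nonneg (pow_nonneg hα t), mul_comm,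
    ← Nat.cast_sub hxy]
  refine mul_le_mul_of_nonneg_right ((abs_sum_le_sum_abs _ _).trans ?_) (pow_nonneg hα t)
  refine (sum_le_card_nsmul _ _ 1 fun w _ => ?_).trans (by simp)
  obtain ⟨h₁, h₁'⟩ := hterm (x + w) ((· + 1) ⁻¹' A)
  obtain ⟨h₂, h₂'⟩ := hterm (x + w) A
  exact abs_sub_le_iff.mpr ⟨by linarith, by linarith⟩

lemma massOf_law_sub_law_Iio {p c pt : ℝ} (hpt : decayRate p c * pt = p) {x y : ℕ}
    (hxy : x ≤ y) (t m : ℕ) :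
    massOf (law p c x t) (Set.Iio (m + 1)) - massOf (law p c y t) (Set.Iio (m + 1))
      = decayRate p c ^ t * ∑ w ∈ range (y - x), law pt c (x + w) t m := by
  have hpre : (· + 1) ⁻¹' Set.Iio (m + 1) = Set.Iio m := by ext; simp
  rw [← neg_sub, massOf_law_sub_eq_sum hpt hxy, hpre, ← mul_neg, ← sum_neg_distrib]
  simp [massOf_Iio, sum_range_succ]

lemma abs_massOf_sub_le_tvDist {q₁ q₂ : ℕ → ℝ} {C : ℝ}
    (hC : ∀ A, |massOf q₁ A - massOf q₂ A| ≤ C) (A : Set ℕ) :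
    |massOf q₁ A - massOf q₂ A| ≤ tvDist q₁ q₂ :=
  le_ciSup ⟨C, by rintro _ ⟨B, rfl⟩; exact hC B⟩ A

lemma tvDist_law_mem_Icc {p c pt : ℝ} (hc : c ∈ Set.Icc (0 : ℝ) 1)
    (hpt : decayRate p c * pt = p) (hpt' : pt ∈ Set.Icc (0 : ℝ) 1) (hα : 0 ≤ decayRate p c)
    {x y : ℕ} (hxy : x ≤ y) (t m : ℕ) :
    tvDist (law p c y t) (law p c x t) ∈ Set.Icc
      (decayRate p c ^ t * ∑ w ∈ range (y - x), law pt c (x + w) t m)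
      ((y - x) * decayRate p c ^ t) := by
  have hbound := abs_massOf_law_sub_le hc hpt hpt' hα hxy t
  refine ⟨?_, ciSup_le hbound⟩
  rw [← massOf_law_sub_law_Iio hpt hxy]
  exact (le_abs_self _).trans ((abs_sub_comm _ _).trans_le (abs_massOf_sub_le_tvDist hbound _))

lemma abs_law_sub_le {p c pt : ℝ} (hc : c ∈ Set.Icc (0 : ℝ) 1)
    (hpt : decayRate p c * pt = p) (hpt' : pt ∈ Set.Icc (0 : ℝ) 1) (hα : 0 ≤ decayRate p c)
    (i z t j : ℕ) : |law p c i t j - law p c z t j| ≤ |(i : ℝ) - z| * decayRate p c ^ t := by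
  wlog h : z ≤ i generalizing i z
  · rw [abs_sub_comm, abs_sub_comm (i : ℝ)]
    exact this z i (le_of_not_ge h)
  have := abs_massOf_law_sub_le hc hpt hpt' hα h t {j}
  rwa [massOf_singleton, massOf_singleton, ← abs_of_nonneg (sub_nonneg.2 (Nat.cast_le.2 h))]
    at this

structure IsStationary (P c : ℝ) (π : ℕ → ℝ) : Prop where
  nonneg : ∀ k, 0 ≤ π k
  tsum_eq_one : ∑' k, π k = 1
  tsum_mul_stepFn : ∀ j, ∑' i, π i * stepFn P c i j = π j

namespace IsStationary

variable {P c : ℝ} {π : ℕ → ℝ}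

lemma summable (hπ : IsStationary P c π) : Summable π := by
  by_contra h
  simpa [tsum_eq_zero_of_not_summable h] using hπ.tsum_eq_one

lemma pos_of_forall_le (hπ : IsStationary P c π) {j₀ : ℕ} (h : ∀ j, π j ≤ π j₀) :
    0 < π j₀ := by
  by_contra! h₀
  have : π = 0 := funext fun j => le_antisymm ((h j).trans h₀) (hπ.nonneg j)
  simpa [this] using hπ.tsum_eq_one

lemma tsum_mul_law (hπ : IsStationary P c π) (hP : P ∈ Set.Icc (0 : ℝ) 1)
    (hc : c ∈ Set.Icc (0 : ℝ) 1) (t j : ℕ) : ∑' i, π i * law P c i t j = π j := by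
  induction t generalizing j with
  | zero => simp [law]
  | succ t ih =>
    have hG : Summable (Function.uncurry fun i k => π i * law P c i t k) := by
      rw [summable_prod_of_nonneg]
      · refine ⟨fun i => (summable_law P c i t).mul_left (π i), ?_⟩
        simpa only [Function.uncurry_apply_pair, tsum_mul_left, (hasSum_law P c _ t).tsum_eq,
          mul_one] using hπ.summable
      · rintro ⟨i, k⟩
        exact mul_nonneg (hπ.nonneg i) (law_nonneg hP hc i t k)
    have hF : Summable (Function.uncurry fun i k => π i * law P c i t k * stepFn P c k j) := by
      refine hG.of_nonneg_of_le (fun ⟨i, k⟩ => ?_) (fun ⟨i, k⟩ => ?_)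
      · exact mul_nonneg (mul_nonneg (hπ.nonneg i) (law_nonneg hP hc i t k))
          (stepFn_nonneg hP hc k j)
      · exact mul_le_of_le_one_right (mul_nonneg (hπ.nonneg i) (law_nonneg hP hc i t k))
          (le_hasSum (hasSum_stepFn P c k) j fun _ _ => stepFn_nonneg hP hc k _)
    calc ∑' i, π i * law P c i (t + 1) j
        = ∑' i, ∑' k, π i * law P c i t k * stepFn P c k j := by
          refine tsum_congr fun i => ?_
          rw [law, ← tsum_mul_left]
          simp only [mul_assoc]
      _ = ∑' k, ∑' i, π i * law P c i t k * stepFn P c k j := hF.tsum_comm.symm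
      _ = π j := by simp only [tsum_mul_right, ih, hπ.tsum_mul_stepFn]

lemma tendsto_law (hπ : IsStationary P c π) (hP : P ∈ Set.Ioo (0 : ℝ) 1)
    (hc : c ∈ Set.Ioc (0 : ℝ) 1) (z j : ℕ) :
    Tendsto (fun t => law P c z t j) atTop (𝓝 (π j)) := by
  have hc' : c ∈ Set.Icc (0 : ℝ) 1 := ⟨hc.1.le, hc.2⟩
  have hP' : P ∈ Set.Icc (0 : ℝ) 1 := ⟨hP.1.le, hP.2.le⟩
  have hα := decayRate_pos hP.1 hc'
  have hlaw (i t : ℕ) := law_nonneg hP' hc' i t j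
  have hlaw' (i t : ℕ) := law_le_one hP' hc' i t j
  have hexpand (t : ℕ) :
      ∑' i, π i * (law P c i t j - law P c z t j) = π j - law P c z t j := by
    simp_rw [mul_sub]
    rw [Summable.tsum_sub _ (hπ.summable.mul_right _), hπ.tsum_mul_law hP' hc', tsum_mul_right,
      hπ.tsum_eq_one, one_mul]
    exact hπ.summable.of_nonneg_of_le (fun i => mul_nonneg (hπ.nonneg i) (hlaw i t))
      fun i => mul_le_of_le_one_right (hπ.nonneg i) (hlaw' i t)
  have hdecay (i : ℕ) : Tendsto (fun t => π i * (law P c i t j - law P c z t j)) atTop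
      (𝓝 0) := by
    have hgeom := (tendsto_pow_atTop_nhds_zero_of_lt_one hα.le
      (decayRate_lt_one hP.2 hc.1)).const_mul (π i * |(i : ℝ) - z|)
    rw [mul_zero] at hgeom
    refine squeeze_zero_norm (fun t => ?_) hgeom
    rw [norm_mul, Real.norm_of_nonneg (hπ.nonneg i), mul_assoc]
    exact mul_le_mul_of_nonneg_left (abs_law_sub_le hc' (decayRate_mul_tiltedProb hα.ne')
      (tiltedProb_mem_Icc ⟨hP.1, hP.2.le⟩ hc') hα.le i z t j) (hπ.nonneg i)
  have hdom : ∀ᶠ t in atTop, ∀ i, ‖π i * (law P c i t j - law P c z t j)‖ ≤ π i :=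
    Eventually.of_forall fun t i => by
      rw [norm_mul, Real.norm_of_nonneg (hπ.nonneg i)]
      refine mul_le_of_le_one_right (hπ.nonneg i) (abs_sub_le_iff.mpr ⟨?_, ?_⟩) <;>
        linarith [hlaw i t, hlaw' i t, hlaw z t, hlaw' z t]
  have := (tendsto_tsum_of_dominated_convergence hπ.summable hdecay hdom).const_sub (π j)
  simpa [hexpand] using this

end IsStationary

lemma not_isStationary_one (c : ℝ) (π : ℕ → ℝ) : ¬ IsStationary 1 c π := by
  intro hπ
  have hstep (i j : ℕ) : stepFn 1 c i j = if j = i + 1 then 1 else 0 := by simp [stepFn_eq]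
  have hzero (n : ℕ) : π n = 0 := by
    induction n with
    | zero => simp [← hπ.tsum_mul_stepFn 0, hstep]
    | succ n ih => simp [← hπ.tsum_mul_stepFn (n + 1), hstep, ih]
  simpa [funext hzero] using hπ.tsum_eq_one

lemma ratio_bounds_of_squeeze {d s : ℕ → ℝ} {C r L : ℝ} (hC : 0 < C) (hr : 0 < r)
    (hs : Tendsto s atTop (𝓝 (C * L))) (hd : ∀ t, d t ∈ Set.Icc (r ^ t * s t) (C * r ^ t)) :
    L ≤ liminf (fun t => d t / (C * r ^ t)) atTop ∧
      liminf (fun t => d t / (C * r ^ t)) atTop ≤ limsup (fun t => d t / (C * r ^ t)) atTop ∧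
      limsup (fun t => d t / (C * r ^ t)) atTop ≤ 1 := by
  have hle (t : ℕ) : d t / (C * r ^ t) ≤ 1 := div_le_one_of_le₀ (hd t).2 (by positivity)
  have hge (t : ℕ) : s t / C ≤ d t / (C * r ^ t) := by
    rw [div_le_div_iff₀ hC (by positivity)]
    nlinarith [(hd t).1]
  have hu : Tendsto (fun t => s t / C) atTop (𝓝 L) := by
    simpa [mul_div_cancel_left₀ L hC.ne'] using hs.div_const C
  have hbelow := hu.isBoundedUnder_ge.mono_ge (Eventually.of_forall hge)
  have habove : IsBoundedUnder (· ≤ ·) atTop fun t => d t / (C * r ^ t) :=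
    isBoundedUnder_of ⟨1, hle⟩
  refine ⟨?_, liminf_le_limsup habove hbelow,
    limsup_le_of_le hbelow.isCoboundedUnder_le (Eventually.of_forall hle)⟩
  rw [← hu.liminf_eq]
  exact liminf_le_liminf (Eventually.of_forall hge) hu.isBoundedUnder_ge
    habove.isCoboundedUnder_ge

lemma tendsto_log_div_of_bounds {d : ℕ → ℝ} {a b r : ℝ} (ha : 0 < a) (hr : 0 < r)
    (h : ∀ᶠ t in atTop, d t ∈ Set.Icc (a * r ^ t) (b * r ^ t)) :
    Tendsto (fun t : ℕ => Real.log (d t) / t) atTop (𝓝 (Real.log r)) := by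
  have hlim {C : ℝ} (hC : 0 < C) :
      Tendsto (fun t : ℕ => Real.log (C * r ^ t) / t) atTop (𝓝 (Real.log r)) := by
    have := (tendsto_const_div_atTop_nhds_zero_nat (Real.log C)).add_const (Real.log r)
    rw [zero_add] at this
    refine this.congr' ?_
    filter_upwards [eventually_ne_atTop 0] with t ht
    rw [Real.log_mul hC.ne' (pow_pos hr t).ne', Real.log_pow]
    field_simp
  obtain ⟨t₀, ht₀⟩ := h.exists
  have hb : 0 < b := pos_of_mul_pos_left
    ((mul_pos ha (pow_pos hr t₀)).trans_le (ht₀.1.trans ht₀.2)) (pow_pos hr t₀).le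
  refine tendsto_of_tendsto_of_tendsto_of_le_of_le' (hlim ha) (hlim hb) ?_ ?_ <;>
    filter_upwards [h] with t ht <;> refine div_le_div_of_nonneg_right ?_ t.cast_nonneg
  · exact Real.log_le_log (by positivity) ht.1
  · exact Real.log_le_log ((mul_pos ha (pow_pos hr t)).trans_le ht.1) ht.2

lemma tendsto_log_div_of_squeeze {d s : ℕ → ℝ} {C r L : ℝ} (hC : 0 < C) (hr : 0 < r)
    (hL : 0 < L) (hs : Tendsto s atTop (𝓝 (C * L)))
    (hd : ∀ t, d t ∈ Set.Icc (r ^ t * s t) (C * r ^ t)) :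
    Tendsto (fun t : ℕ => Real.log (d t) / t) atTop (𝓝 (Real.log r)) := by
  refine tendsto_log_div_of_bounds (a := C * L / 2) (b := C) (by positivity) hr ?_
  filter_upwards [hs.eventually (eventually_ge_nhds (half_lt_self (by positivity)))]
    with t ht
  exact ⟨by nlinarith [(hd t).1, pow_pos hr t], (hd t).2⟩

end CatastropheWalk

open CatastropheWalk Finset Topology

/-- **Corollary 3.4.** Let `α = 1 - c(1-p)`, `p̃ = p/α`, and let `π^{(p̃)}` be the stationary
distribution of the chain with parameters `(p̃, c)`. If `j*` maximizes `π^{(p̃)}`, then for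
`x < y`, `π^{(p̃)}(j*) ≤ liminf_t d_t(x,y)/((y-x)α^t) ≤ limsup_t d_t(x,y)/((y-x)α^t) ≤ 1`;
in particular `lim_t (1/t) ln d_t(x,y) = ln α`. -/
theorem tv_sharp_rate
    (p c : ℝ) (hp : p ∈ Set.Ioo (0 : ℝ) 1) (hc : c ∈ Set.Ioc (0 : ℝ) 1)
    (piT : ℕ → ℝ) (hpi0 : ∀ k, 0 ≤ piT k) (hpi1 : ∑' k, piT k = 1)
    (hpis : ∀ j, ∑' i, piT i * stepFn (p / (1 - c * (1 - p))) c i j = piT j)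
    (jstar : ℕ) (hjstar : ∀ j, piT j ≤ piT jstar)
    (x y : ℕ) (hxy : x < y) :
    (piT jstar ≤
        liminf (fun t : ℕ =>
          tvDist (law p c y t) (law p c x t) / (((y : ℝ) - (x : ℝ)) * (1 - c * (1 - p)) ^ t))
          atTop) ∧
    (liminf (fun t : ℕ =>
          tvDist (law p c y t) (law p c x t) / (((y : ℝ) - (x : ℝ)) * (1 - c * (1 - p)) ^ t))
          atTop ≤
        limsup (fun t : ℕ =>
          tvDist (law p c y t) (law p c x t) / (((y : ℝ) - (x : ℝ)) * (1 - c * (1 - p)) ^ t))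
          atTop) ∧
    (limsup (fun t : ℕ =>
          tvDist (law p c y t) (law p c x t) / (((y : ℝ) - (x : ℝ)) * (1 - c * (1 - p)) ^ t))
          atTop ≤ 1) ∧
    Tendsto (fun t : ℕ => Real.log (tvDist (law p c y t) (law p c x t)) / (t : ℝ)) atTop
      (nhds (Real.log (1 - c * (1 - p)))) := by
  have hc' : c ∈ Set.Icc (0 : ℝ) 1 := ⟨hc.1.le, hc.2⟩
  have hπ : IsStationary (tiltedProb p c) c piT := ⟨hpi0, hpi1, hpis⟩
  have hα := decayRate_pos hp.1 hc'
  have hpt := tiltedProb_mem_Icc ⟨hp.1, hp.2.le⟩ hc'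
  have hpt' : tiltedProb p c ∈ Set.Ioo 0 1 :=
    ⟨div_pos hp.1 hα, hpt.2.lt_of_ne fun h => not_isStationary_one c piT (h ▸ hπ)⟩
  have hs : Tendsto (fun t => ∑ w ∈ range (y - x), law (tiltedProb p c) c (x + w) t jstar)
      atTop (𝓝 (((y : ℝ) - x) * piT jstar)) := by
    have := tendsto_finsetSum (range (y - x)) fun w _ => hπ.tendsto_law hpt' hc (x + w) jstar
    rwa [sum_const, card_range, nsmul_eq_mul, Nat.cast_sub hxy.le] at this
  have hyx : (0 : ℝ) < y - x := sub_pos.2 (Nat.cast_lt.2 hxy)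
  have hd (t : ℕ) :=
    tvDist_law_mem_Icc hc' (decayRate_mul_tiltedProb hα.ne') hpt hα.le hxy.le t jstar
  obtain ⟨hliminf, hmono, hlimsup⟩ := ratio_bounds_of_squeeze hyx hα hs hd
  exact ⟨hliminf, hmono, hlimsup,
    tendsto_log_div_of_squeeze hyx hα (hπ.pos_of_forall_le hjstar) hs hd⟩
end
end

section
/- Let α = 1 − c(1−p), p̃ = p/α, and let π^{(p̃)} be the stationary distribution of the chain with parameters (p̃, c). Then for all x < y in ℤ₊, the conditional law P_{x,y}(X_t ∈ · | ξ > t) under the coupling converges in distribution to π^{(p̃)} as t → ∞, i.e. for every j ∈ ℤ₊, lim_{t→∞} P_{x,y}(X_t = j | ξ > t) = π^{(p̃)}(j). -/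
/-!
Let `h = y - x` and `α_m = p + (1 - p)(1 - c)^m`. Between catastrophes `H` is frozen and at a
catastrophe it is thinned binomially, so the factorial moments of `H` factor:
`E[f(X_t) C(H_t, m); ξ > t] = C(h, m) α_m^t E^{(p/α_m)}_x[f(X_t)]` for `m ≥ 1`; weighting by
`C(H_t, m)` turns `X` into the walk with parameter `p/α_m`. Inclusion–exclusion,
`1_{H ≠ 0} = ∑_{m ≥ 1} (-1)^{m+1} C(H, m)`, writes the numerator and the denominator of the
conditional law as finite sums of such terms. After division by `α_1^t` the terms with `m ≥ 2`
decay geometrically, and the ratio tends to `lim_t P^{(p̃)}_x(X_t = j)`.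

This limit is `π^{(p̃)}(j)` because the walk with parameter `p̃ < 1` is ergodic: in the same
coupling, `X_t` and `X_t + H_t` are walks started at `x` and `x + h`, and they agree unless
`H_t ≠ 0`, which has probability at most `E[H_t] = h α_1^t`. The case `c = 1` is vacuous:
then `p̃ = 1` and the walk has no stationary distribution.
-/

open scoped BigOperators
open Filter

noncomputable section

open Finset

section Binomial

variable {ε : ℝ}

lemma binomPMF_of_lt {n k : ℕ} (h : n < k) : binomPMF n ε k = 0 := by
  simp [binomPMF, not_le.mpr h]

lemma binomPMF_nonneg (h0 : 0 ≤ ε) (h1 : ε ≤ 1) (n k : ℕ) : 0 ≤ binomPMF n ε k := by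
  unfold binomPMF
  split_ifs
  · have : 0 ≤ 1 - ε := by linarith
    positivity
  · rfl

lemma binomPMF_succ_zero (n : ℕ) : binomPMF (n + 1) ε 0 = (1 - ε) * binomPMF n ε 0 := by
  simp [binomPMF, pow_succ]
  ring

lemma binomPMF_succ_succ (n k : ℕ) :
    binomPMF (n + 1) ε (k + 1) = ε * binomPMF n ε k + (1 - ε) * binomPMF n ε (k + 1) := by
  unfold binomPMF
  rcases lt_trichotomy k n with hk | rfl | hk
  · rw [if_pos (by omega), if_pos hk.le, if_pos (by omega), Nat.choose_succ_succ', Nat.cast_add,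
      show n + 1 - (k + 1) = n - (k + 1) + 1 by omega, show n - k = n - (k + 1) + 1 by omega]
    ring
  · simp [pow_succ]
    ring
  · simp [show ¬k + 1 ≤ n + 1 by omega, show ¬k ≤ n by omega, show ¬k + 1 ≤ n by omega]

def binomExp (n : ℕ) (ε : ℝ) (g : ℕ → ℝ) : ℝ :=
  ∑ k ∈ range (n + 1), binomPMF n ε k * g k

lemma binomExp_eq_sum {n N : ℕ} (hN : n < N) (g : ℕ → ℝ) :
    binomExp n ε g = ∑ k ∈ range N, binomPMF n ε k * g k :=
  sum_subset (range_subset_range.mpr hN) fun k _ hk => by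
    rw [binomPMF_of_lt (by simpa using hk), zero_mul]

lemma binomExp_zero (g : ℕ → ℝ) : binomExp 0 ε g = g 0 := by
  simp [binomExp, binomPMF]

lemma binomExp_succ (n : ℕ) (g : ℕ → ℝ) :
    binomExp (n + 1) ε g = ε * binomExp n ε (fun k => g (k + 1)) + (1 - ε) * binomExp n ε g := by
  rw [binomExp, sum_range_succ', binomExp_eq_sum (N := n + 2) (by omega) g,
    sum_range_succ' _ (n + 1)]
  simp only [binomPMF_succ_succ, binomPMF_succ_zero, add_mul, sum_add_distrib, mul_assoc, ← mul_sum,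
    binomExp]
  ring

lemma binomExp_add (n : ℕ) (f g : ℕ → ℝ) :
    binomExp n ε (fun k => f k + g k) = binomExp n ε f + binomExp n ε g := by
  simp only [binomExp, mul_add, sum_add_distrib]

lemma binomExp_sub (n : ℕ) (f g : ℕ → ℝ) :
    binomExp n ε (fun k => f k - g k) = binomExp n ε f - binomExp n ε g := by
  simp only [binomExp, mul_sub, sum_sub_distrib]

lemma binomExp_const_mul (n : ℕ) (a : ℝ) (f : ℕ → ℝ) :
    binomExp n ε (fun k => a * f k) = a * binomExp n ε f := by
  simp only [binomExp, mul_sum]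
  exact sum_congr rfl fun _ _ => by ring

lemma binomExp_mul_const (n : ℕ) (a : ℝ) (f : ℕ → ℝ) :
    binomExp n ε (fun k => f k * a) = binomExp n ε f * a := by
  simp only [binomExp, sum_mul]
  exact sum_congr rfl fun _ _ => by ring

lemma binomExp_const (n : ℕ) (a : ℝ) : binomExp n ε (fun _ => a) = a := by
  induction n with
  | zero => exact binomExp_zero _
  | succ n ih => rw [binomExp_succ, ih]; ring

lemma abs_binomExp_le (h0 : 0 ≤ ε) (h1 : ε ≤ 1) (n : ℕ) {f g : ℕ → ℝ} (hfg : ∀ k, |f k| ≤ g k) :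
    |binomExp n ε f| ≤ binomExp n ε g :=
  (abs_sum_le_sum_abs _ _).trans <| sum_le_sum fun k _ => by
    rw [abs_mul, abs_of_nonneg (binomPMF_nonneg h0 h1 n k)]
    exact mul_le_mul_of_nonneg_left (hfg k) (binomPMF_nonneg h0 h1 n k)

lemma binomExp_mem_Icc (h0 : 0 ≤ ε) (h1 : ε ≤ 1) (n : ℕ) {f : ℕ → ℝ} (hf : ∀ k, f k ∈ Set.Icc 0 1) :
    binomExp n ε f ∈ Set.Icc 0 1 := by
  refine ⟨sum_nonneg fun k _ => mul_nonneg (binomPMF_nonneg h0 h1 n k) (hf k).1, ?_⟩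
  calc binomExp n ε f ≤ binomExp n ε (fun _ => 1) :=
        sum_le_sum fun k _ => mul_le_mul_of_nonneg_left (hf k).2 (binomPMF_nonneg h0 h1 n k)
    _ = 1 := binomExp_const n 1

lemma binomExp_choose (n m : ℕ) :
    binomExp n ε (fun k => (k.choose m : ℝ)) = n.choose m * ε ^ m := by
  induction n generalizing m with
  | zero => cases m <;> simp [binomExp_zero]
  | succ n ih =>
    cases m with
    | zero => simpa using binomExp_const (ε := ε) (n + 1) 1
    | succ m =>
      simp only [binomExp_succ, Nat.choose_succ_succ', Nat.cast_add, binomExp_add, ih]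
      ring

lemma binomExp_binomExp_add (a b : ℕ) (f : ℕ → ℝ) :
    binomExp a ε (fun i => binomExp b ε (fun j => f (i + j))) = binomExp (a + b) ε f := by
  induction b generalizing f with
  | zero => simp [binomExp_zero]
  | succ b ih =>
    simp only [binomExp_succ, binomExp_add, binomExp_const_mul, ← add_assoc]
    rw [ih, ih (fun k => f (k + 1))]

end Binomial

section KernelDuality

variable {S : Type*} {K : S → S → ℝ}

lemma support_tsum_mul_kernel_subset (μ : S → ℝ) (hμ : μ.support.Finite) :
    (fun s => ∑' s', μ s' * K s' s).support ⊆ ⋃ s' ∈ μ.support, (K s').support := by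
  intro s hs
  rw [Function.mem_support, tsum_eq_sum (s := hμ.toFinset) fun s' hs' => by
    simp [Function.notMem_support.mp (by simpa using hs')]] at hs
  obtain ⟨s', hs', hne⟩ := exists_ne_zero_of_sum_ne_zero hs
  exact Set.mem_biUnion (by simpa using hs') (right_ne_zero_of_mul hne)

lemma tsum_tsum_mul_kernel_mul (hK : ∀ s, (K s).support.Finite) (μ : S → ℝ)
    (hμ : μ.support.Finite) (f : S → ℝ) :
    ∑' s, (∑' s', μ s' * K s' s) * f s = ∑' s', μ s' * ∑' s, K s' s * f s := by
  have hsum : ∀ (g : S → ℝ), ∑' s', μ s' * g s' = ∑ s' ∈ hμ.toFinset, μ s' * g s' := fun g =>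
    tsum_eq_sum fun s' hs' => by simp [Function.notMem_support.mp (by simpa using hs')]
  rw [hsum (fun s' => ∑' s, K s' s * f s)]
  simp only [hsum (K · _), sum_mul, mul_assoc, ← tsum_mul_left]
  exact Summable.tsum_finsetSum fun s' _ => summable_of_hasFiniteSupport (L := .unconditional S)
    ((hK s').subset fun s hs => left_ne_zero_of_mul (right_ne_zero_of_mul hs))

lemma support_finite_of_kernel (hK : ∀ s, (K s).support.Finite) {μ : ℕ → S → ℝ}
    (hμ0 : (μ 0).support.Finite) (hμ : ∀ t s, μ (t + 1) s = ∑' s', μ t s' * K s' s) (t : ℕ) :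
    (μ t).support.Finite := by
  induction t with
  | zero => exact hμ0
  | succ t ih =>
    rw [show μ (t + 1) = fun s => ∑' s', μ t s' * K s' s from funext (hμ t)]
    exact (ih.biUnion fun s' _ => hK s').subset (support_tsum_mul_kernel_subset _ ih)

variable (P : (S → ℝ) → S → ℝ)

lemma tsum_mul_eq_tsum_mul_iterate (hK : ∀ s, (K s).support.Finite)
    (hP : ∀ f s, ∑' s', K s s' * f s' = P f s) {μ : ℕ → S → ℝ} (hμ0 : (μ 0).support.Finite)
    (hμ : ∀ t s, μ (t + 1) s = ∑' s', μ t s' * K s' s) (t : ℕ) (f : S → ℝ) :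
    ∑' s, μ t s * f s = ∑' s, μ 0 s * P^[t] f s := by
  induction t generalizing f with
  | zero => rfl
  | succ t ih =>
    simp only [hμ]
    rw [tsum_tsum_mul_kernel_mul hK _ (support_finite_of_kernel hK hμ0 hμ t)]
    simp only [hP, ih, Function.iterate_succ_apply]

end KernelDuality

lemma iterate_apply_eq_pow_smul {R M N : Type*} [Monoid R] [MulAction R M] {C : M → M}
    (hC : ∀ (a : R) g, C (a • g) = a • C g) {Φ : N → M} {P : N → N} {α : R}
    (h : ∀ f, C (Φ f) = α • Φ (P f)) (t : ℕ) (f : N) : C^[t] (Φ f) = α ^ t • Φ (P^[t] f) := by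
  induction t with
  | zero => simp
  | succ t ih =>
    rw [Function.iterate_succ_apply', ih, hC, h, ← Function.iterate_succ_apply' P, smul_smul,
      ← pow_succ]

section Chain

variable {q c : ℝ}

/-- The backward operator `f ↦ ∑ⱼ p^{q,c}(·, j) f(j)` of the random walk. -/
def stepOp (q c : ℝ) (f : ℕ → ℝ) (i : ℕ) : ℝ :=
  q * f (i + 1) + (1 - q) * binomExp i (1 - c) f

lemma stepFn_eq (i j : ℕ) :
    stepFn q c i j = (if j = i + 1 then q else 0) + (1 - q) * binomPMF i (1 - c) j := by
  unfold stepFn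
  congr 1
  split_ifs with h
  · rfl
  · rw [binomPMF_of_lt (not_le.mp h), mul_zero]

lemma support_stepFn_subset (i : ℕ) : (stepFn q c i).support ⊆ Set.Iic (i + 1) := by
  intro j hj
  by_contra hlt
  simp only [Set.mem_Iic, not_le] at hlt
  exact hj (by rw [stepFn_eq, if_neg (by omega), binomPMF_of_lt (by omega)]; ring)

lemma tsum_stepFn_mul (f : ℕ → ℝ) (i : ℕ) : ∑' j, stepFn q c i j * f j = stepOp q c f i := by
  have hzero : ∀ j ∉ range (i + 2), stepFn q c i j * f j = 0 := fun j hj => by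
    have : stepFn q c i j = 0 := Function.notMem_support.mp fun h => hj (by
      simpa [Nat.lt_succ_iff] using support_stepFn_subset i h)
    rw [this, zero_mul]
  rw [tsum_eq_sum hzero]
  simp only [stepFn_eq, add_mul, sum_add_distrib, ite_mul, zero_mul, sum_ite_eq', mem_range,
    (show i + 1 < i + 2 by omega), if_true, mul_assoc, ← mul_sum,
    ← binomExp_eq_sum (show i < i + 2 by omega)]
  rfl

lemma ite_one_zero_mem_Icc (k u : ℕ) : (if k = u then (1 : ℝ) else 0) ∈ Set.Icc 0 1 := by
  split_ifs <;> simp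

lemma stepOp_one (q c : ℝ) : stepOp q c (fun _ => 1) = fun _ => 1 := by
  ext i
  simp only [stepOp, binomExp_const]
  ring

lemma law_eq_stepOp_iterate (x t u : ℕ) :
    law q c x t u = (stepOp q c)^[t] (fun j => if j = u then 1 else 0) x := by
  have := tsum_mul_eq_tsum_mul_iterate (stepOp q c)
    (fun i => (Set.finite_Iic (i + 1)).subset (support_stepFn_subset i)) tsum_stepFn_mul
    (μ := law q c x) ((Set.finite_singleton x).subset fun j hj => by by_contra h; simp_all [law])
    (fun _ _ => rfl) t (fun j => if j = u then 1 else 0)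
  simpa [law] using this

variable (hq0 : 0 ≤ q) (hq1 : q ≤ 1) (hc0 : 0 ≤ c) (hc1 : c ≤ 1)
include hq0 hq1 hc0 hc1

lemma stepOp_mem_Icc {f : ℕ → ℝ} (hf : ∀ k, f k ∈ Set.Icc 0 1) (i : ℕ) :
    stepOp q c f i ∈ Set.Icc 0 1 := by
  obtain ⟨h0, h1⟩ := binomExp_mem_Icc (ε := 1 - c) (by linarith) (by linarith) i hf
  obtain ⟨hf0, hf1⟩ := hf (i + 1)
  constructor <;> unfold stepOp <;> nlinarith

lemma stepOp_iterate_mem_Icc {f : ℕ → ℝ} (hf : ∀ k, f k ∈ Set.Icc 0 1) (t i : ℕ) :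
    (stepOp q c)^[t] f i ∈ Set.Icc 0 1 := by
  induction t generalizing i with
  | zero => exact hf i
  | succ t ih =>
    rw [Function.iterate_succ_apply']
    exact stepOp_mem_Icc hq0 hq1 hc0 hc1 ih i

lemma law_mem_Icc (x t u : ℕ) : law q c x t u ∈ Set.Icc 0 1 := by
  rw [law_eq_stepOp_iterate]
  exact stepOp_iterate_mem_Icc hq0 hq1 hc0 hc1 (ite_one_zero_mem_Icc · u) t x

lemma stepFn_nonneg (i j : ℕ) : 0 ≤ stepFn q c i j := by
  have := binomPMF_nonneg (ε := 1 - c) (by linarith) (by linarith) i j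
  rw [stepFn_eq]
  split_ifs <;> nlinarith

variable {π : ℕ → ℝ} (hπ0 : ∀ k, 0 ≤ π k) (hπ : Summable π)
  (hstat : ∀ j, ∑' i, π i * stepFn q c i j = π j)
include hπ0 hπ hstat

lemma tsum_mul_stepOp_of_stationary {g : ℕ → ℝ} (hg : ∀ k, g k ∈ Set.Icc 0 1) :
    ∑' i, π i * stepOp q c g i = ∑' k, π k * g k := by
  set F : ℕ → ℕ → ℝ := fun i k => π i * stepFn q c i k * g k
  have hF0 : 0 ≤ Function.uncurry F := fun ik =>
    mul_nonneg (mul_nonneg (hπ0 _) (stepFn_nonneg hq0 hq1 hc0 hc1 _ _)) (hg _).1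
  have hrow : ∀ i, ∑' k, F i k = π i * stepOp q c g i := fun i => by
    simp only [F, mul_assoc, tsum_mul_left, tsum_stepFn_mul]
  have hrow_summable : ∀ i, Summable (F i) := fun i =>
    summable_of_hasFiniteSupport <|
      ((Set.finite_Iic (i + 1)).subset (support_stepFn_subset i)).subset
        fun k hk => right_ne_zero_of_mul (left_ne_zero_of_mul hk)
  have hF : Summable (Function.uncurry F) := by
    refine (summable_prod_of_nonneg hF0).mpr ⟨hrow_summable, ?_⟩
    simp only [Function.uncurry_apply_pair, hrow]
    refine hπ.of_nonneg_of_le (fun i => mul_nonneg (hπ0 i) (stepOp_mem_Icc hq0 hq1 hc0 hc1 hg i).1)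
      fun i => mul_le_of_le_one_right (hπ0 i) (stepOp_mem_Icc hq0 hq1 hc0 hc1 hg i).2
  simp only [← hrow, ← hF.tsum_comm, F, tsum_mul_right, hstat]

lemma tsum_mul_stepOp_iterate_of_stationary {g : ℕ → ℝ} (hg : ∀ k, g k ∈ Set.Icc 0 1) (t : ℕ) :
    ∑' i, π i * (stepOp q c)^[t] g i = ∑' k, π k * g k := by
  induction t with
  | zero => rfl
  | succ t ih =>
    rw [Function.iterate_succ_apply', tsum_mul_stepOp_of_stationary hq0 hq1 hc0 hc1 hπ0 hπ hstat
      (stepOp_iterate_mem_Icc hq0 hq1 hc0 hc1 hg t), ih]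

lemma tsum_mul_law_of_stationary (t u : ℕ) : ∑' i, π i * law q c i t u = π u := by
  simp_rw [law_eq_stepOp_iterate]
  rw [tsum_mul_stepOp_iterate_of_stationary hq0 hq1 hc0 hc1 hπ0 hπ hstat
    (ite_one_zero_mem_Icc · u) t]
  simp

end Chain

def factorialMomentRate (p c : ℝ) (m : ℕ) : ℝ := p + (1 - p) * (1 - c) ^ m

section FactorialMomentRate

variable {p c : ℝ}

lemma factorialMomentRate_one : factorialMomentRate p c 1 = 1 - c * (1 - p) := by
  unfold factorialMomentRate
  ring

lemma le_factorialMomentRate (hp1 : p ≤ 1) (hc1 : c ≤ 1) (m : ℕ) :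
    p ≤ factorialMomentRate p c m := by
  have := mul_nonneg (sub_nonneg.mpr hp1) (pow_nonneg (sub_nonneg.mpr hc1) m)
  unfold factorialMomentRate
  linarith

lemma lt_factorialMomentRate (hp1 : p < 1) (hc1 : c < 1) (m : ℕ) :
    p < factorialMomentRate p c m := by
  have := mul_pos (sub_pos.mpr hp1) (pow_pos (sub_pos.mpr hc1) m)
  unfold factorialMomentRate
  linarith

lemma factorialMomentRate_lt_one (hp1 : p < 1) (hc0 : 0 < c) (hc1 : c ≤ 1) {m : ℕ} (hm : m ≠ 0) :
    factorialMomentRate p c m < 1 := by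
  have := mul_lt_of_lt_one_right (sub_pos.mpr hp1)
    (pow_lt_one₀ (sub_nonneg.mpr hc1) (by linarith) hm)
  unfold factorialMomentRate
  linarith

lemma factorialMomentRate_strictAnti (hp1 : p < 1) (hc0 : 0 < c) (hc1 : c < 1) :
    StrictAnti (factorialMomentRate p c) := fun m n hmn => by
  have := mul_lt_mul_of_pos_left
    (pow_lt_pow_right_of_lt_one₀ (sub_pos.mpr hc1) (by linarith) hmn) (sub_pos.mpr hp1)
  unfold factorialMomentRate
  linarith

end FactorialMomentRate

section Coupling

variable {p c : ℝ}

/-- The backward operator `g ↦ ∑_{s'} cstep p c (·) s' g(s')` of the coupling `(X, H)`. -/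
def coupledOp (p c : ℝ) (g : ℕ × ℕ → ℝ) (s : ℕ × ℕ) : ℝ :=
  p * g (s.1 + 1, s.2) +
    (1 - p) * binomExp s.1 (1 - c) (fun a => binomExp s.2 (1 - c) (fun b => g (a, b)))

lemma cstep_eq_zero {s s' : ℕ × ℕ} (h : s.1 + 1 < s'.1 ∨ s.2 < s'.2) : cstep p c s s' = 0 := by
  have hne : s' ≠ (s.1 + 1, s.2) := by rintro rfl; simp at h
  rcases h with h | h
  · simp [cstep, hne, binomPMF_of_lt (show s.1 < s'.1 by omega)]
  · simp [cstep, hne, binomPMF_of_lt h]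

lemma support_cstep_subset (s : ℕ × ℕ) :
    (cstep p c s).support ⊆ ↑(range (s.1 + 2) ×ˢ range (s.2 + 1)) := by
  intro s' hs'
  simp only [coe_product, coe_range, Set.mem_prod, Set.mem_Iio]
  by_contra h
  exact hs' (cstep_eq_zero (by omega))

lemma tsum_cstep_mul (g : ℕ × ℕ → ℝ) (s : ℕ × ℕ) :
    ∑' s', cstep p c s s' * g s' = coupledOp p c g s := by
  rw [tsum_eq_sum fun s' hs' => by
    rw [Function.notMem_support.mp fun h => hs' (support_cstep_subset s h), zero_mul]]
  simp only [cstep, add_mul, sum_add_distrib, ite_mul, zero_mul, sum_ite_eq', mem_product,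
    mem_range, (show s.1 + 1 < s.1 + 2 by omega), (show s.2 < s.2 + 1 by omega), and_self, if_true,
    sum_product]
  rw [coupledOp, binomExp_eq_sum (show s.1 < s.1 + 2 by omega)]
  simp only [binomExp, mul_sum]
  congr 1
  exact sum_congr rfl fun a _ => sum_congr rfl fun b _ => by ring

lemma coupledOp_smul (a : ℝ) (g : ℕ × ℕ → ℝ) : coupledOp p c (a • g) = a • coupledOp p c g := by
  ext s
  simp only [coupledOp, Pi.smul_apply, smul_eq_mul, binomExp_const_mul]
  ring

lemma coupledOp_sub (g g' : ℕ × ℕ → ℝ) :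
    coupledOp p c (fun s => g s - g' s) = fun s => coupledOp p c g s - coupledOp p c g' s := by
  ext s
  simp only [coupledOp, binomExp_sub]
  ring

lemma coupledOp_mul_choose (f : ℕ → ℝ) (m : ℕ) (s : ℕ × ℕ) :
    coupledOp p c (fun s => f s.1 * s.2.choose m) s =
      (p * f (s.1 + 1) + (1 - p) * (1 - c) ^ m * binomExp s.1 (1 - c) f) * s.2.choose m := by
  simp only [coupledOp, binomExp_const_mul, binomExp_choose, binomExp_mul_const]
  ring

lemma coupledOp_comp_fst (f : ℕ → ℝ) :
    coupledOp p c (fun s => f s.1) = fun s => stepOp p c f s.1 := by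
  ext s
  simpa [stepOp] using coupledOp_mul_choose (p := p) (c := c) f 0 s

lemma coupledOp_comp_add (f : ℕ → ℝ) :
    coupledOp p c (fun s => f (s.1 + s.2)) = fun s => stepOp p c f (s.1 + s.2) := by
  ext s
  simp only [coupledOp, stepOp, binomExp_binomExp_add, add_right_comm s.1 1 s.2]

lemma coupledOp_snd (s : ℕ × ℕ) :
    coupledOp p c (fun s => (s.2 : ℝ)) s = factorialMomentRate p c 1 * s.2 := by
  simpa [binomExp_const, factorialMomentRate] using
    coupledOp_mul_choose (p := p) (c := c) (fun _ => 1) 1 s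

lemma coupledOp_iterate_snd (t : ℕ) (s : ℕ × ℕ) :
    (coupledOp p c)^[t] (fun s => (s.2 : ℝ)) s = factorialMomentRate p c 1 ^ t * s.2 := by
  induction t generalizing s with
  | zero => simp
  | succ t ih =>
    rw [Function.iterate_succ_apply', show (coupledOp p c)^[t] (fun s => (s.2 : ℝ)) =
      factorialMomentRate p c 1 ^ t • fun s => (s.2 : ℝ) from funext ih, coupledOp_smul,
      Pi.smul_apply, coupledOp_snd, smul_eq_mul]
    ring

lemma stepOp_iterate_sub_eq (f : ℕ → ℝ) (x h t : ℕ) :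
    (stepOp p c)^[t] f x - (stepOp p c)^[t] f (x + h) =
      (coupledOp p c)^[t] (fun s => f s.1 - f (s.1 + s.2)) (x, h) := by
  have hsemi : Function.Semiconj (fun (f : ℕ → ℝ) (s : ℕ × ℕ) => f s.1 - f (s.1 + s.2))
      (stepOp p c) (coupledOp p c) := fun f => by
    rw [coupledOp_sub, coupledOp_comp_fst, coupledOp_comp_add]
  exact congrFun (hsemi.iterate_right t f) (x, h)

variable (hp0 : 0 ≤ p) (hp1 : p ≤ 1) (hc0 : 0 ≤ c) (hc1 : c ≤ 1)
include hp0 hp1 hc0 hc1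

lemma abs_coupledOp_le {g g' : ℕ × ℕ → ℝ} (h : ∀ s, |g s| ≤ g' s) (s : ℕ × ℕ) :
    |coupledOp p c g s| ≤ coupledOp p c g' s := by
  have hE := abs_binomExp_le (ε := 1 - c) (by linarith) (by linarith) s.1 fun a =>
    abs_binomExp_le (ε := 1 - c) (by linarith) (by linarith) s.2 fun b => h (a, b)
  unfold coupledOp
  calc _ ≤ |p * g (s.1 + 1, s.2)| + |(1 - p) * binomExp s.1 (1 - c) _| := abs_add_le _ _
    _ ≤ _ := by
      rw [abs_mul, abs_mul, abs_of_nonneg hp0, abs_of_nonneg (by linarith : 0 ≤ 1 - p)]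
      gcongr
      exact h _

lemma abs_coupledOp_iterate_le {g g' : ℕ × ℕ → ℝ} (h : ∀ s, |g s| ≤ g' s) (t : ℕ) (s : ℕ × ℕ) :
    |(coupledOp p c)^[t] g s| ≤ (coupledOp p c)^[t] g' s := by
  induction t generalizing g g' s with
  | zero => exact h s
  | succ t ih => exact ih (abs_coupledOp_le hp0 hp1 hc0 hc1 h) s

/-- Coupling bound: `X_t` and `X_t + H_t` are walks started at `x` and `x + h` that differ only
while `H_t ≠ 0`, which has probability at most `E[H_t] = h α_1^t`. -/
lemma abs_stepOp_iterate_sub_le {f : ℕ → ℝ} (hf : ∀ k, f k ∈ Set.Icc 0 1) (x h t : ℕ) :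
    |(stepOp p c)^[t] f x - (stepOp p c)^[t] f (x + h)| ≤ factorialMomentRate p c 1 ^ t * h := by
  rw [stepOp_iterate_sub_eq]
  refine (abs_coupledOp_iterate_le hp0 hp1 hc0 hc1 (fun s => ?_) t (x, h)).trans_eq
    (coupledOp_iterate_snd t (x, h))
  rcases Nat.eq_zero_or_pos s.2 with h0 | hpos
  · simp [h0]
  · have : (1 : ℝ) ≤ s.2 := by exact_mod_cast hpos
    have := hf s.1
    have := hf (s.1 + s.2)
    rw [abs_le, Set.mem_Icc] at *
    constructor <;> linarith

end Coupling

section Ergodicity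

variable {q c : ℝ} (hq0 : 0 ≤ q) (hq1 : q < 1) (hc0 : 0 < c) (hc1 : c ≤ 1)
include hq0 hq1 hc0 hc1

lemma tendsto_law_sub_law (x y u : ℕ) :
    Tendsto (fun t => law q c x t u - law q c y t u) atTop (nhds 0) := by
  wlog hxy : x ≤ y generalizing x y
  · simpa using (this y x (le_of_not_ge hxy)).neg
  obtain ⟨h, rfl⟩ := Nat.exists_eq_add_of_le hxy
  have hr := tendsto_pow_atTop_nhds_zero_of_lt_one (hq0.trans (le_factorialMomentRate hq1.le hc1 1))
    (factorialMomentRate_lt_one hq1 hc0 hc1 one_ne_zero)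
  refine squeeze_zero_norm (fun t => ?_) (by simpa using hr.mul_const (h : ℝ))
  simp only [law_eq_stepOp_iterate, Real.norm_eq_abs]
  exact abs_stepOp_iterate_sub_le hq0 hq1.le hc0.le hc1 (ite_one_zero_mem_Icc · u) x h t

lemma tendsto_law_of_stationary {π : ℕ → ℝ} (hπ0 : ∀ k, 0 ≤ π k) (hπ1 : ∑' k, π k = 1)
    (hstat : ∀ j, ∑' i, π i * stepFn q c i j = π j) (x u : ℕ) :
    Tendsto (fun t => law q c x t u) atTop (nhds (π u)) := by
  have hπ : Summable π := by
    by_contra h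
    simp [tsum_eq_zero_of_not_summable h] at hπ1
  have hlaw := law_mem_Icc hq0 hq1.le hc0.le hc1 (c := c)
  have hsplit (t : ℕ) :
      law q c x t u - π u = ∑' i, π i * (law q c x t u - law q c i t u) := by
    have hsum : Summable fun i => π i * law q c i t u := hπ.of_nonneg_of_le
      (fun i => mul_nonneg (hπ0 i) (hlaw i t u).1) fun i => mul_le_of_le_one_right (hπ0 i)
        (hlaw i t u).2
    simp only [mul_sub]
    rw [(hπ.mul_right _).tsum_sub hsum, tsum_mul_right, hπ1, one_mul,
      tsum_mul_law_of_stationary hq0 hq1.le hc0.le hc1 hπ0 hπ hstat]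
  have hlim : Tendsto (fun t => ∑' i, π i * (law q c x t u - law q c i t u)) atTop (nhds 0) := by
    rw [← tsum_zero]
    refine tendsto_tsum_of_dominated_convergence (bound := π) hπ
      (fun i => by simpa using (tendsto_law_sub_law hq0 hq1 hc0 hc1 x i u).const_mul (π i))
      (.of_forall fun t i => by
        rw [norm_mul, Real.norm_of_nonneg (hπ0 i)]
        refine mul_le_of_le_one_right (hπ0 i) ?_
        have := hlaw x t u
        have := hlaw i t u
        rw [Real.norm_eq_abs, abs_le, Set.mem_Icc] at *
        constructor <;> linarith)
  simpa using (hlim.congr fun t => (hsplit t).symm).add_const (π u)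

end Ergodicity

lemma sum_range_neg_one_pow_mul_choose_succ {n N : ℕ} (hn : n ≠ 0) (hN : n ≤ N) :
    ∑ m ∈ range N, (-1 : ℝ) ^ m * n.choose (m + 1) = 1 := by
  have h : ∑ m ∈ range (N + 1), (-1 : ℝ) ^ m * n.choose m = 0 := by
    rw [← sum_subset (range_subset_range.mpr (by omega : n + 1 ≤ N + 1)) fun m _ hm => by
      rw [Nat.choose_eq_zero_of_lt (by simpa using hm), Nat.cast_zero, mul_zero]]
    exact_mod_cast Int.alternating_sum_range_choose_of_ne hn
  rw [sum_range_succ'] at h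
  simp only [pow_succ, mul_neg_one, neg_mul, sum_neg_distrib] at h
  simp at h
  linarith

section Killed

variable {p c : ℝ} {x h : ℕ}

/-- `coupledOp` for the coupling killed when `H` hits `0`. -/
def killedOp (p c : ℝ) (g : ℕ × ℕ → ℝ) : ℕ × ℕ → ℝ :=
  coupledOp p c fun s => if s.2 = 0 then 0 else g s

lemma killedOp_smul (a : ℝ) (g : ℕ × ℕ → ℝ) : killedOp p c (a • g) = a • killedOp p c g := by
  rw [killedOp, killedOp, ← coupledOp_smul]
  congr 1
  ext s
  split_ifs <;> simp [*]

lemma killedOp_mul_choose {m : ℕ} (hm : m ≠ 0) {α q : ℝ} (hq : α * q = p)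
    (hα : α * (1 - q) = (1 - p) * (1 - c) ^ m) (f : ℕ → ℝ) :
    killedOp p c (fun s => f s.1 * s.2.choose m) =
      α • fun s => stepOp q c f s.1 * s.2.choose m := by
  have hkill : (fun s : ℕ × ℕ => if s.2 = 0 then 0 else f s.1 * s.2.choose m) =
      fun s => f s.1 * s.2.choose m := funext fun s => by
    split_ifs with h0 <;> simp [h0, Nat.choose_eq_zero_of_lt (Nat.pos_of_ne_zero hm)]
  ext s
  rw [killedOp, hkill, coupledOp_mul_choose, Pi.smul_apply, smul_eq_mul, stepOp]
  linear_combination (-(f (s.1 + 1) * s.2.choose m)) * hq -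
    (binomExp s.1 (1 - c) f * s.2.choose m) * hα

lemma slaw_succ_eq (t : ℕ) (s : ℕ × ℕ) :
    slaw p c x h (t + 1) s =
      ∑' s', slaw p c x h t s' * (if s.2 = 0 then 0 else cstep p c s' s) := by
  simp only [slaw]
  split_ifs <;> simp

lemma slaw_eq_zero_of_snd_eq_zero {s : ℕ × ℕ} (hs : s.2 = 0) (t : ℕ) : slaw p c x h t s = 0 := by
  cases t <;> simp [slaw, hs]

lemma slaw_eq_zero_of_lt_snd {s : ℕ × ℕ} (hs : h < s.2) (t : ℕ) : slaw p c x h t s = 0 := by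
  induction t generalizing s with
  | zero =>
    have : s ≠ (x, h) := by rintro rfl; simp at hs
    simp [slaw, this]
  | succ t ih =>
    rw [slaw_succ_eq, tsum_congr fun s' => ?_, tsum_zero]
    by_cases hs' : h < s'.2
    · rw [ih hs', zero_mul]
    · rw [cstep_eq_zero (Or.inr (by omega)), ite_self, mul_zero]

lemma support_killedStep_finite (s : ℕ × ℕ) :
    (fun s' : ℕ × ℕ => if s'.2 = 0 then 0 else cstep p c s s').support.Finite := by
  refine (finite_toSet _).subset ((Function.support_subset_iff'.mpr fun s' hs' => ?_).trans
    (support_cstep_subset (p := p) (c := c) s))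
  simp [Function.notMem_support.mp hs']

lemma support_slaw_finite (t : ℕ) : (slaw p c x h t).support.Finite :=
  support_finite_of_kernel support_killedStep_finite
    ((Set.finite_singleton (x, h)).subset fun s hs => by by_contra h'; simp_all [slaw])
    slaw_succ_eq t

lemma tsum_slaw_mul (hh : h ≠ 0) (g : ℕ × ℕ → ℝ) (t : ℕ) :
    ∑' s, slaw p c x h t s * g s = (killedOp p c)^[t] g (x, h) := by
  have hP : ∀ g s, ∑' s', (if s'.2 = 0 then 0 else cstep p c s s') * g s' = killedOp p c g s :=
    fun g s => by
      rw [killedOp, ← tsum_cstep_mul]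
      exact tsum_congr fun s' => by split_ifs <;> simp
  rw [tsum_mul_eq_tsum_mul_iterate (killedOp p c) support_killedStep_finite hP
    (support_slaw_finite 0) slaw_succ_eq, tsum_eq_single (x, h) fun s hs => by simp [slaw, hs]]
  simp [slaw, hh]

/-- Inclusion–exclusion: `1 = ∑_{m < h} (-1)^m C(H, m + 1)` whenever `1 ≤ H ≤ h`. -/
lemma tsum_slaw_mul_eq_sum (hp0 : 0 < p) (hp1 : p ≤ 1) (hc1 : c ≤ 1) (hh : h ≠ 0) (f : ℕ → ℝ)
    (t : ℕ) :
    ∑' s, slaw p c x h t s * f s.1 = ∑ m ∈ range h, (-1) ^ m * (h.choose (m + 1) : ℝ) *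
      factorialMomentRate p c (m + 1) ^ t *
        (stepOp (p / factorialMomentRate p c (m + 1)) c)^[t] f x := by
  have hie : ∀ s, slaw p c x h t s * f s.1 = ∑ m ∈ range h,
      (-1) ^ m * (slaw p c x h t s * (f s.1 * s.2.choose (m + 1))) := fun s => by
    by_cases h0 : slaw p c x h t s = 0
    · simp [h0]
    have h1 : s.2 ≠ 0 := fun h1 => h0 (slaw_eq_zero_of_snd_eq_zero h1 t)
    have h2 : s.2 ≤ h := not_lt.mp fun h2 => h0 (slaw_eq_zero_of_lt_snd h2 t)
    calc slaw p c x h t s * f s.1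
        = slaw p c x h t s * f s.1 * ∑ m ∈ range h, (-1 : ℝ) ^ m * s.2.choose (m + 1) := by
          rw [sum_range_neg_one_pow_mul_choose_succ h1 h2, mul_one]
      _ = _ := by
          rw [mul_sum]
          exact sum_congr rfl fun m _ => by ring
  rw [tsum_congr hie, Summable.tsum_finsetSum fun m _ => summable_of_hasFiniteSupport <|
    (support_slaw_finite t).subset fun s hs => left_ne_zero_of_mul (right_ne_zero_of_mul hs)]
  refine sum_congr rfl fun m _ => ?_
  have hq : factorialMomentRate p c (m + 1) * (p / factorialMomentRate p c (m + 1)) = p :=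
    mul_div_cancel₀ p (hp0.trans_le (le_factorialMomentRate hp1 hc1 _)).ne'
  rw [tsum_mul_left, tsum_slaw_mul hh, iterate_apply_eq_pow_smul killedOp_smul
    (killedOp_mul_choose (by omega : m + 1 ≠ 0) hq
      (by rw [mul_sub, hq, factorialMomentRate]; ring))]
  simp only [Pi.smul_apply, smul_eq_mul]
  ring

end Killed

lemma tsum_mul_ite_fst {α β : Type*} [DecidableEq α] (g : α × β → ℝ) (a : α) :
    ∑' s, g s * (if s.1 = a then 1 else 0) = ∑' b, g (a, b) := by
  rw [← (Prod.mk_right_injective a).tsum_eq fun s hs => ⟨s.2, ?_⟩]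
  · simp
  · by_contra h
    exact hs (by simp [show s.1 ≠ a from fun h' => h (Prod.ext h'.symm rfl)])

lemma tendsto_sum_mul_pow_div_pow {N : ℕ} (hN : N ≠ 0) {a β : ℕ → ℝ} {b : ℕ → ℕ → ℝ} {L : ℝ}
    (hβ0 : 0 < β 0) (hβ : ∀ m, m ≠ 0 → |β m| < β 0) (hb : ∀ m t, |b m t| ≤ 1)
    (hL : Tendsto (b 0) atTop (nhds L)) :
    Tendsto (fun t => (∑ m ∈ range N, a m * β m ^ t * b m t) / β 0 ^ t) atTop (nhds (a 0 * L)) := by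
  have hterm : ∀ m ∈ range N, Tendsto (fun t => a m * (β m / β 0) ^ t * b m t) atTop
      (nhds (if m = 0 then a 0 * L else 0)) := fun m _ => by
    split_ifs with hm
    · subst hm
      simpa [div_self hβ0.ne'] using hL.const_mul (a 0)
    · have hr : |β m / β 0| < 1 := by
        rw [abs_div, abs_of_pos hβ0, div_lt_one hβ0]
        exact hβ m hm
      refine squeeze_zero_norm (fun t => ?_) (by
        simpa using (tendsto_pow_atTop_nhds_zero_of_lt_one (abs_nonneg _) hr).const_mul |a m|)
      rw [norm_mul, norm_mul, norm_pow, Real.norm_eq_abs, Real.norm_eq_abs, Real.norm_eq_abs]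
      exact mul_le_of_le_one_right (by positivity) (hb m t)
  have hsum := tendsto_finsetSum _ hterm
  rw [sum_ite_eq', if_pos (mem_range.mpr (Nat.pos_of_ne_zero hN))] at hsum
  refine hsum.congr fun t => ?_
  rw [sum_div]
  exact sum_congr rfl fun m _ => by rw [div_pow]; field_simp

lemma not_stationary_stepFn_one (c : ℝ) {π : ℕ → ℝ} (hπ1 : ∑' k, π k = 1) :
    ¬ ∀ j, ∑' i, π i * stepFn 1 c i j = π j := by
  intro hstat
  have hstep : ∀ i j, stepFn 1 c i j = if j = i + 1 then 1 else 0 := fun i j => by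
    simp [stepFn_eq]
  have hzero : ∀ j, π j = 0 := by
    intro j
    induction j with
    | zero => simp [← hstat 0, hstep]
    | succ j ih =>
      rw [← hstat (j + 1), tsum_eq_single j fun i hi => by simp [hstep]; omega]
      simp [hstep, ih]
  simp [hzero] at hπ1

lemma tendsto_tsum_slaw_mul_div_pow {p c : ℝ} {x h : ℕ} (hp0 : 0 < p) (hp1 : p < 1) (hc0 : 0 < c)
    (hc1 : c < 1) (hh : h ≠ 0) {f : ℕ → ℝ} (hf : ∀ k, f k ∈ Set.Icc 0 1) {L : ℝ}
    (hL : Tendsto (fun t => (stepOp (p / factorialMomentRate p c 1) c)^[t] f x) atTop (nhds L)) :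
    Tendsto (fun t => (∑' s, slaw p c x h t s * f s.1) / factorialMomentRate p c 1 ^ t) atTop
      (nhds (h * L)) := by
  have hpos : ∀ m, 0 < factorialMomentRate p c m := fun m =>
    hp0.trans_le (le_factorialMomentRate hp1.le hc1.le m)
  have hb : ∀ m t, |(stepOp (p / factorialMomentRate p c (m + 1)) c)^[t] f x| ≤ 1 := fun m t => by
    obtain ⟨h0, h1⟩ := stepOp_iterate_mem_Icc (div_nonneg hp0.le (hpos _).le)
      ((div_le_one (hpos _)).mpr (le_factorialMomentRate hp1.le hc1.le _)) hc0.le hc1.le hf t x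
    exact abs_le.mpr ⟨by linarith, h1⟩
  simp only [tsum_slaw_mul_eq_sum hp0 hp1.le hc1.le hh]
  convert tendsto_sum_mul_pow_div_pow (a := fun m => (-1) ^ m * (h.choose (m + 1) : ℝ))
    (β := fun m => factorialMomentRate p c (m + 1)) hh (hpos 1) (fun m hm => by
    rw [abs_of_pos (hpos _)]
    exact factorialMomentRate_strictAnti hp1 hc0 hc1 (by omega)) hb hL using 2
  simp

/-- **Theorem 3.7.** Let `α = 1 - c(1-p)`, `p̃ = p/α`, and let `π^{(p̃)}` be the stationary
distribution of the chain with parameters `(p̃, c)`. For `x < y`, the conditional law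
`P_{x,y}(X_t ∈ · | ξ > t)` converges in distribution to `π^{(p̃)}` as `t → ∞`. -/
theorem conditioned_coupling_limit
    (p c : ℝ) (hp : p ∈ Set.Ioo (0 : ℝ) 1) (hc : c ∈ Set.Ioc (0 : ℝ) 1)
    (piT : ℕ → ℝ) (hpi0 : ∀ k, 0 ≤ piT k) (hpi1 : ∑' k, piT k = 1)
    (hpis : ∀ j, ∑' i, piT i * stepFn (p / (1 - c * (1 - p))) c i j = piT j)
    (x y : ℕ) (hxy : x < y) :
    ∀ j : ℕ,
      Tendsto (fun t : ℕ =>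
          (∑' h' : ℕ, slaw p c x (y - x) t (j, h')) / (∑' s : ℕ × ℕ, slaw p c x (y - x) t s))
        atTop (nhds (piT j)) := by
  intro j
  obtain ⟨⟨hp0, hp1⟩, hc0, hc1⟩ := And.intro hp hc
  have hh : y - x ≠ 0 := by omega
  have hc1' : c < 1 := hc1.lt_of_ne fun hc => not_stationary_stepFn_one c hpi1 (by
    simpa [hc, hp0.ne'] using hpis)
  have hα := lt_factorialMomentRate hp1 hc1' 1
  have hlaw := tendsto_law_of_stationary (div_nonneg hp0.le (hp0.trans hα).le)
    ((div_lt_one (hp0.trans hα)).mpr hα) hc0 hc1 hpi0 hpi1 (by rwa [factorialMomentRate_one]) x j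
  have hnum := tendsto_tsum_slaw_mul_div_pow hp0 hp1 hc0 hc1' hh (ite_one_zero_mem_Icc · j)
    (by simpa only [law_eq_stepOp_iterate] using hlaw)
  have hden := tendsto_tsum_slaw_mul_div_pow (x := x) hp0 hp1 hc0 hc1' hh (f := fun _ => 1)
    (fun _ => ⟨zero_le_one, le_rfl⟩) (L := 1)
    (by simp only [Function.iterate_fixed (stepOp_one _ c)]; exact tendsto_const_nhds)
  convert hnum.div hden (by simpa using hh) using 2 with t
  · rw [Pi.div_apply, div_div_div_cancel_right₀ (pow_ne_zero _ (hp0.trans hα).ne'),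
      ← tsum_mul_ite_fst]
    simp
  · field_simp
end
end
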